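/- arXiv:math/0310334 — 10 statements merged into one kernel-verified Lean document; each statement's English description precedes it below -/
import Mathlib

section
/- Let k be a field and let B be the ℕ×ℕ matrix over k with entries b_{n(n+1)/2 + i, (n-1)n/2 + i} = 1 for every n > 0 and 0 ≤ i < n, and b_{ij} = 0 otherwise. Then Bᵗ · B = I. -/
open scoped Classical

/-- The matrix `B` over `k`: `b_{n(n+1)/2 + i, (n-1)n/2 + i} = 1` for `n > 0`, `0 ≤ i < n`,
and all other entries `0`. -/
noncomputable def matB (k : Type*) [Field k] : ℕ → ℕ → k := fun p q =>
  if ∃ n : ℕ, 0 < n ∧ ∃ i : ℕ, i < n ∧ p = n * (n + 1) / 2 + i ∧ q = (n - 1) * n / 2 + i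
  then 1 else 0

/-- The identity `ℕ×ℕ` matrix over `k`. -/
def idMat (k : Type*) [Field k] : ℕ → ℕ → k := fun i j => if i = j then 1 else 0

/-- Product of `ℕ×ℕ` matrices, defined entrywise by the (finite) sums `∑ l, M i l * N l j`. -/
noncomputable def matMul {k : Type*} [Field k] (M N : ℕ → ℕ → k) : ℕ → ℕ → k :=
  fun i j => ∑ᶠ l, M i l * N l j

/-- Transpose of an `ℕ×ℕ` matrix. -/
def matTranspose {k : Type*} [Field k] (M : ℕ → ℕ → k) : ℕ → ℕ → k := fun i j => M j i

/-!
Every `q : ℕ` is uniquely `m (m + 1) / 2 + i` with `i ≤ m`, and column `q` of `B` has a single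
nonzero entry, a `1` in row `(m + 1) (m + 2) / 2 + i`; decomposing that row index the same way
recovers `(m, i)`. So the columns of `B` are distinct standard basis vectors, which makes them
orthonormal for the standard bilinear form.
-/

theorem matMul_transpose_self_of_graph {k : Type*} [Field k] {M : ℕ → ℕ → k}
    {R : ℕ → ℕ → Prop} (hM : ∀ p q, M p q = if R p q then 1 else 0)
    (exists_left : ∀ q, ∃ p, R p q) (left_unique : ∀ {p p' q}, R p q → R p' q → p = p')
    (right_unique : ∀ {p q q'}, R p q → R p q' → q = q') :
    matMul (matTranspose M) M = idMat k := by
  funext q q'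
  obtain ⟨p, hpq⟩ := exists_left q
  have hsum : matMul (matTranspose M) M q q' = M p q' := by
    refine (finsum_eq_single _ p fun l hl => ?_).trans (by simp [hM, matTranspose, hpq])
    have hlq : ¬R l q := fun h => hl (left_unique h hpq)
    simp [hM, matTranspose, hlq]
  rw [hsum, hM, idMat]
  exact if_congr ⟨right_unique hpq, fun h => h ▸ hpq⟩ rfl rfl

def tri (m : ℕ) : ℕ := m * (m + 1) / 2

lemma tri_succ (m : ℕ) : tri (m + 1) = tri m + m + 1 := by
  have : (m + 1) * (m + 1 + 1) = m * (m + 1) + 2 * (m + 1) := by ring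
  rw [tri, tri, this, Nat.add_mul_div_left _ _ two_pos]
  ring

lemma tri_monotone : Monotone tri :=
  monotone_nat_of_le_succ fun m => by rw [tri_succ]; omega

lemma tri_add_lt_tri_succ {m i : ℕ} (hi : i ≤ m) : tri m + i < tri (m + 1) := by
  rw [tri_succ]; omega

lemma exists_eq_tri_add (q : ℕ) : ∃ m i, i ≤ m ∧ q = tri m + i := by
  induction q with
  | zero => exact ⟨0, 0, le_rfl, rfl⟩
  | succ q ih =>
    obtain ⟨m, i, hi, rfl⟩ := ih
    rcases hi.lt_or_eq with hi | rfl
    · exact ⟨m, i + 1, hi, rfl⟩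
    · exact ⟨i + 1, 0, Nat.zero_le _, by rw [tri_succ]⟩

lemma tri_add_inj {m i m' i' : ℕ} (hi : i ≤ m) (hi' : i' ≤ m')
    (h : tri m + i = tri m' + i') : m = m' ∧ i = i' := by
  rcases lt_trichotomy m m' with hm | rfl | hm
  · have := tri_monotone (show m + 1 ≤ m' by omega)
    have := tri_add_lt_tri_succ hi
    omega
  · omega
  · have := tri_monotone (show m' + 1 ≤ m by omega)
    have := tri_add_lt_tri_succ hi'
    omega

lemma matB_apply (k : Type*) [Field k] (p q : ℕ) :
    matB k p q = if ∃ m i, i ≤ m ∧ p = tri (m + 1) + i ∧ q = tri m + i then 1 else 0 := by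
  refine if_congr ⟨?_, ?_⟩ rfl rfl
  · rintro ⟨_ | m, hn, i, hi, rfl, rfl⟩
    · omega
    · exact ⟨m, i, by omega, rfl, by simp [tri]⟩
  · rintro ⟨m, i, hi, rfl, rfl⟩
    exact ⟨m + 1, m.succ_pos, i, by omega, rfl, by simp [tri]⟩

/-- `Bᵗ · B = I`. -/
theorem matB_transpose_mul_self (k : Type*) [Field k] :
    matMul (matTranspose (matB k)) (matB k) = idMat k := by
  refine matMul_transpose_self_of_graph (matB_apply k) (fun q => ?_) ?_ ?_
  · obtain ⟨m, i, hi, rfl⟩ := exists_eq_tri_add q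
    exact ⟨_, m, i, hi, rfl, rfl⟩
  · rintro p p' _ ⟨m, i, hi, rfl, hq⟩ ⟨m', i', hi', rfl, hq'⟩
    obtain ⟨rfl, rfl⟩ := tri_add_inj hi hi' (hq.symm.trans hq')
    rfl
  · rintro _ q q' ⟨m, i, hi, hp, rfl⟩ ⟨m', i', hi', hp', rfl⟩
    obtain ⟨⟨⟩, rfl⟩ := tri_add_inj (m := m + 1) (m' := m' + 1) (by omega) (by omega)
      (hp.symm.trans hp')
    rfl
end

section
/- Let k be a field and R = RCFM(k). For the shift matrix A (a_{i+1,i}=1, else 0), the set (I − A)·R equals the set of matrices R' ∈ R such that for every column j, the sum over all i of r'_{ij} equals 0. -/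
/-- A matrix is row-column finite if every row and every column has finitely many
nonzero entries. -/
def RCF {k : Type*} [Field k] (M : ℕ → ℕ → k) : Prop :=
  (∀ i, {j | M i j ≠ 0}.Finite) ∧ (∀ j, {i | M i j ≠ 0}.Finite)

/-- The shift matrix `A` over `k`: `a_{i+1,i} = 1` and all other entries `0`. -/
def shiftA (k : Type*) [Field k] : ℕ → ℕ → k := fun i j => if i = j + 1 then 1 else 0

/-!
Left multiplication by `I - A` replaces each column `x` of a matrix by its backward difference
`x i - x (i - 1)`. A finitely supported column has telescoping difference sum `0`, and conversely
a finitely supported column with sum `0` is the backward difference of its partial sums, which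
are again finitely supported because they equal the total sum `0` beyond the support. Row
finiteness is preserved in both directions since each row of the result involves finitely many
rows of the input.
-/

open Finset Function

section BackDiff

variable {M : Type*} [AddCommGroup M]

/-- `backDiff f n = f n - f (n - 1)`, with `f (-1) = 0`. -/
def backDiff (f : ℕ → M) : ℕ → M
  | 0 => f 0
  | n + 1 => f (n + 1) - f n

theorem sum_range_succ_backDiff (f : ℕ → M) (n : ℕ) :
    ∑ i ∈ range (n + 1), backDiff f i = f n := by
  induction n with
  | zero => simp [backDiff]
  | succ n ih => rw [sum_range_succ, ih, backDiff, add_sub_cancel]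

theorem backDiff_sum_range_succ (g : ℕ → M) :
    backDiff (fun n => ∑ i ∈ range (n + 1), g i) = g := by
  funext n
  cases n with
  | zero => simp [backDiff]
  | succ n => rw [backDiff, sum_range_succ _ (n + 1), add_sub_cancel_left]

theorem support_backDiff_subset (f : ℕ → M) :
    support (backDiff f) ⊆ support f ∪ (· + 1) '' support f := by
  rintro (_ | n) hn
  · exact Or.inl hn
  · by_cases hf : f (n + 1) = 0
    · refine Or.inr ⟨n, fun h => hn ?_, rfl⟩
      simp [backDiff, hf, h]
    · exact Or.inl hf

theorem Function.HasFiniteSupport.backDiff {f : ℕ → M} (hf : HasFiniteSupport f) :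
    HasFiniteSupport (_root_.backDiff f) :=
  (hf.union (hf.image _)).subset (support_backDiff_subset f)

theorem finsum_backDiff {f : ℕ → M} (hf : HasFiniteSupport f) : ∑ᶠ i, backDiff f i = 0 := by
  obtain ⟨N, hN⟩ := hf.bddAbove
  have hsupp : support (backDiff f) ⊆ range (N + 2) := by
    intro n hn
    rw [coe_range, Set.mem_Iio]
    rcases support_backDiff_subset f hn with hn | ⟨m, hm, rfl⟩
    · have := hN hn; omega
    · have := hN hm; dsimp only; omega
  rw [finsum_eq_finsetSum_of_support_subset _ hsupp, sum_range_succ_backDiff]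
  exact notMem_support.mp fun h => absurd (hN h) (by omega)

theorem Function.HasFiniteSupport.sum_range_succ {g : ℕ → M} (hg : HasFiniteSupport g)
    (hsum : ∑ᶠ i, g i = 0) : HasFiniteSupport fun n => ∑ i ∈ range (n + 1), g i := by
  obtain ⟨N, hN⟩ := hg.bddAbove
  refine (Set.finite_Iio N).subset fun n hn => ?_
  by_contra! hNn
  refine hn ?_
  rw [← hsum, finsum_eq_finsetSum_of_support_subset _ fun i hi => ?_]
  rw [coe_range, Set.mem_Iio]
  have := hN hi
  simp only [Set.mem_Iio, not_lt] at hNn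
  omega

end BackDiff

section ShiftMatrix

variable {k : Type*} [Field k]

theorem matMul_sub_shiftA_apply (X : ℕ → ℕ → k) (i j : ℕ) :
    matMul (idMat k - shiftA k) X i j = backDiff (fun l => X l j) i := by
  simp only [matMul, idMat, shiftA, Pi.sub_apply, sub_mul, ite_mul, one_mul, zero_mul]
  cases i with
  | zero =>
    rw [finsum_eq_single _ 0 fun l hl => by simp [Ne.symm hl]]
    simp [backDiff]
  | succ n =>
    rw [finsum_eq_finsetSum_of_support_subset _ (s := {n, n + 1}), sum_pair (by omega)]
    · simp [backDiff, sub_eq_neg_add]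
    · intro l hl
      rw [coe_pair, Set.mem_insert_iff, Set.mem_singleton_iff]
      by_contra! h
      rw [mem_support, if_neg (by omega), if_neg (by omega), sub_zero] at hl
      exact hl rfl

def colPartialSum (P : ℕ → ℕ → k) : ℕ → ℕ → k := fun i j => ∑ l ∈ range (i + 1), P l j

theorem matMul_sub_shiftA_colPartialSum (P : ℕ → ℕ → k) :
    matMul (idMat k - shiftA k) (colPartialSum P) = P := by
  funext i j
  rw [matMul_sub_shiftA_apply]
  exact congrFun (backDiff_sum_range_succ fun l => P l j) i

theorem RCF.matMul_sub_shiftA {X : ℕ → ℕ → k} (hX : RCF X) :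
    RCF (matMul (idMat k - shiftA k) X) := by
  simp only [RCF, matMul_sub_shiftA_apply]
  refine ⟨fun i => ?_, fun j => HasFiniteSupport.backDiff (hX.2 j)⟩
  cases i with
  | zero => exact hX.1 0
  | succ n => exact HasFiniteSupport.sub (hX.1 (n + 1)) (hX.1 n)

theorem RCF.colPartialSum {P : ℕ → ℕ → k} (hP : RCF P) (hsum : ∀ j, ∑ᶠ i, P i j = 0) :
    RCF (colPartialSum P) :=
  ⟨fun _ => HasFiniteSupport.sum hP.1 _,
    fun j => HasFiniteSupport.sum_range_succ (hP.2 j) (hsum j)⟩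

end ShiftMatrix

/-- `(I−A)·RCFM(k)` consists exactly of the row-column-finite matrices all of whose
column sums vanish. -/
theorem sub_shiftA_mul_RCFM (k : Type*) [Field k] :
    {P : ℕ → ℕ → k | ∃ X, RCF X ∧ P = matMul (idMat k - shiftA k) X} =
      {P : ℕ → ℕ → k | RCF P ∧ ∀ j, (∑ᶠ i, P i j) = 0} := by
  ext P
  constructor
  · rintro ⟨X, hX, rfl⟩
    refine ⟨hX.matMul_sub_shiftA, fun j => ?_⟩
    simp only [matMul_sub_shiftA_apply]
    exact finsum_backDiff (hX.2 j)
  · rintro ⟨hP, hsum⟩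
    exact ⟨colPartialSum P, hP.colPartialSum hsum, (matMul_sub_shiftA_colPartialSum P).symm⟩
end

section
/- Let k be a field and R = RCFM(k). For the shift matrix A, the set (I − Aᵗ)·R equals the set of matrices R' ∈ R such that for every i ∈ ℕ, the tail sum ∑_{n ≥ i} r'_{nj} is zero for all but finitely many j ∈ ℕ. -/
/-!
Left multiplication by `I - Aᵗ` is the column-wise difference operator
`(ΔX) i j = X i j - X (i + 1) j`. On finitely supported sequences `Δ` is inverted by the
tail-sum operator `T`: `Δ ∘ T = id` is a one-term computation, and `T ∘ Δ = id` follows because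
`Δ` is injective there (a finitely supported sequence killed by `Δ` is constant, hence zero).
Hence column-finiteness passes between `X` and `P = ΔX` in both directions, rows of `ΔX` are
finite when those of `X` are, and the tail-sum condition on `P` says exactly that `X = TP` has
finite rows.
-/

open Function

noncomputable def tailSum {M : Type*} [AddCommGroup M] (g : ℕ → M) (i : ℕ) : M :=
  ∑ᶠ n, if i ≤ n then g n else 0

section TailSum

variable {M : Type*} [AddCommGroup M] {g : ℕ → M}

theorem finite_support_ite_le (hg : (support g).Finite) (i : ℕ) :
    (support fun n => if i ≤ n then g n else 0).Finite :=
  hg.subset fun n hn => by by_contra h; simp_all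

theorem tailSum_sub_tailSum_succ (hg : (support g).Finite) (i : ℕ) :
    tailSum g i - tailSum g (i + 1) = g i := by
  rw [tailSum, tailSum, ← finsum_sub_distrib (finite_support_ite_le hg i)
    (finite_support_ite_le hg (i + 1))]
  have hdiff : ∀ n, ((if i ≤ n then g n else 0) - if i + 1 ≤ n then g n else 0)
      = if n = i then g n else 0 := by
    intro n
    rcases lt_trichotomy n i with h | rfl | h
    · simp [show ¬i ≤ n by omega, show ¬i + 1 ≤ n by omega, show n ≠ i by omega]
    · simp
    · simp [show i ≤ n by omega, show i + 1 ≤ n by omega, show n ≠ i by omega]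
  simp only [hdiff]
  rw [finsum_eq_single _ i fun n hn => if_neg hn, if_pos rfl]

theorem finite_support_tailSum (hg : (support g).Finite) : (support (tailSum g)).Finite := by
  obtain ⟨b, hb⟩ := hg.bddAbove
  refine (Set.finite_Iic b).subset fun i hi => ?_
  by_contra hib
  refine hi (finsum_eq_zero_of_forall_eq_zero fun n => ?_)
  split_ifs with hin
  · by_contra hn
    exact hib (hin.trans (hb hn))
  · rfl

theorem finite_support_sub_succ (hg : (support g).Finite) :
    (support fun n => g n - g (n + 1)).Finite :=
  (hg.union (hg.preimage Nat.succ_injective.injOn)).subset (support_sub _ _)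

theorem eq_of_sub_succ_eq {f : ℕ → M} (hf : (support f).Finite) (hg : (support g).Finite)
    (h : ∀ n, f n - f (n + 1) = g n - g (n + 1)) : f = g := by
  obtain ⟨b, hb⟩ := (hf.union hg).bddAbove
  have hvanish : ∀ m, b < m → f m - g m = 0 := fun m hm => by
    have hf' : f m = 0 := by by_contra h'; exact hm.not_ge (hb (Or.inl h'))
    have hg' : g m = 0 := by by_contra h'; exact hm.not_ge (hb (Or.inr h'))
    rw [hf', hg', sub_zero]
  have hshift : ∀ n m, f n - g n = f (n + m) - g (n + m) := fun n m => by
    induction m with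
    | zero => rfl
    | succ m ih => rw [ih, sub_eq_sub_iff_sub_eq_sub.mpr (h (n + m))]; rfl
  funext n
  rw [← sub_eq_zero, hshift n (b + 1), hvanish _ (by omega)]

theorem tailSum_sub_succ (hg : (support g).Finite) :
    tailSum (fun n => g n - g (n + 1)) = g :=
  eq_of_sub_succ_eq (finite_support_tailSum (finite_support_sub_succ hg)) hg
    (tailSum_sub_tailSum_succ (finite_support_sub_succ hg))

end TailSum

theorem matMul_idMat_sub_transpose_shiftA_apply {k : Type*} [Field k] (X : ℕ → ℕ → k)
    (i j : ℕ) : matMul (idMat k - matTranspose (shiftA k)) X i j = X i j - X (i + 1) j := by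
  have hsupp : (support fun l => (idMat k - matTranspose (shiftA k)) i l * X l j)
      ⊆ ({i, i + 1} : Finset ℕ) := fun l hl => by
    by_contra hl'
    simp_all [idMat, matTranspose, shiftA, eq_comm]
  rw [matMul, finsum_eq_finsetSum_of_support_subset _ hsupp, Finset.sum_pair (by omega)]
  simp [idMat, matTranspose, shiftA, sub_eq_add_neg]

/-- `(I−Aᵗ)·RCFM(k)` consists exactly of the row-column-finite matrices `P` such that
for every `i`, the tail sums `∑_{n ≥ i} P n j` vanish for all but finitely many `j`. -/
theorem sub_shiftA_transpose_mul_RCFM (k : Type*) [Field k] :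
    {P : ℕ → ℕ → k | ∃ X, RCF X ∧ P = matMul (idMat k - matTranspose (shiftA k)) X} =
      {P : ℕ → ℕ → k | RCF P ∧
        ∀ i, {j | (∑ᶠ n, if i ≤ n then P n j else 0) ≠ 0}.Finite} := by
  ext P
  constructor
  · rintro ⟨X, ⟨hXrow, hXcol⟩, rfl⟩
    simp only [Set.mem_ofPred_eq, RCF, matMul_idMat_sub_transpose_shiftA_apply]
    refine ⟨⟨fun i => ((hXrow i).union (hXrow (i + 1))).subset (support_sub _ _),
      fun j => finite_support_sub_succ (hXcol j)⟩, fun i => ?_⟩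
    convert hXrow i using 4 with j
    exact congrFun (tailSum_sub_succ (hXcol j)) i
  · rintro ⟨⟨-, hPcol⟩, hPtail⟩
    refine ⟨fun i j => tailSum (fun n => P n j) i,
      ⟨hPtail, fun j => finite_support_tailSum (hPcol j)⟩, ?_⟩
    ext i j
    rw [matMul_idMat_sub_transpose_shiftA_apply, tailSum_sub_tailSum_succ (hPcol j)]
end

section
/- Let k be a field, V₀ a k-vector space, and V₁,…,Vₙ subspaces of V₀. Define V_i^rig = V_i ∩ (∑_{j≠i} V_j) for 1 ≤ i ≤ n. Then there is a short exact sequence of vector spaces 0 → ⊕_{i=1}^n (V_i / V_i^rig) → V₀ / (∑_{i=1}^n V_i^rig) → V₀ / (∑_{i=1}^n V_i) → 0, where the first map is induced by the inclusions V_i ⊆ V₀ and the second is the natural projection. -/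
/-!
Every element of `⨆ i, V i` is a sum of elements `yᵢ ∈ Vᵢ`, which gives exactness in the middle
and the surjectivity of the projection for any subspaces `Wᵢ ≤ Vᵢ` in place of `Vᵢ^rig`.
Injectivity is where rigidification enters: each `Vⱼ^rig` lies in `∑_{l≠i} V_l`, so if
`∑ yⱼ ∈ ∑ Vⱼ^rig` then `yᵢ = ∑ yⱼ - ∑_{j≠i} yⱼ` lies in `Vᵢ ∩ ∑_{j≠i} Vⱼ = Vᵢ^rig`.
-/

namespace Submodule

variable {R M ι : Type*} [Ring R] [AddCommGroup M] [Module R M]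

def rigidification (V : ι → Submodule R M) (i : ι) : Submodule R M :=
  V i ⊓ ⨆ j ∈ ({i}ᶜ : Set ι), V j

lemma le_iSup_compl (V : ι → Submodule R M) {i j : ι} (hji : j ≠ i) :
    V j ≤ ⨆ l ∈ ({i}ᶜ : Set ι), V l :=
  le_biSup V hji

lemma iSup_rigidification_le_iSup_compl (V : ι → Submodule R M) (i : ι) :
    ⨆ j, rigidification V j ≤ ⨆ l ∈ ({i}ᶜ : Set ι), V l := by
  refine iSup_le fun j => ?_
  rcases eq_or_ne j i with rfl | hji
  · exact inf_le_right
  · exact inf_le_left.trans (le_iSup_compl V hji)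

lemma mem_rigidification_of_sum_mem [Fintype ι] [DecidableEq ι] (V : ι → Submodule R M)
    (y : ∀ i, V i) (hy : ∑ j, (y j : M) ∈ ⨆ j, rigidification V j) (i : ι) :
    (y i : M) ∈ rigidification V i := by
  refine ⟨(y i).2, ?_⟩
  have hsplit : (y i : M) = ∑ j, (y j : M) - ∑ j ∈ Finset.univ.erase i, (y j : M) :=
    eq_sub_of_add_eq (Finset.add_sum_erase _ (fun j => (y j : M)) (Finset.mem_univ i))
  rw [hsplit]
  refine sub_mem (iSup_rigidification_le_iSup_compl V i hy) (sum_mem fun j hj => ?_)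
  exact le_iSup_compl V (Finset.ne_of_mem_erase hj) (y j).2

section PiQuotient

variable [Fintype ι] (V W : ι → Submodule R M)

def piQuotientToQuotientISup :
    (∀ i, V i ⧸ (W i).comap (V i).subtype) →ₗ[R] M ⧸ ⨆ i, W i :=
  ∑ i, mapQ _ _ (V i).subtype (comap_mono (le_iSup W i)) ∘ₗ LinearMap.proj i

lemma piQuotientToQuotientISup_mk (y : ∀ i, V i) :
    piQuotientToQuotientISup V W (fun i => Quotient.mk (y i)) = Quotient.mk (∑ i, (y i : M)) := by
  simp only [piQuotientToQuotientISup, LinearMap.sum_apply, LinearMap.comp_apply,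
    LinearMap.proj_apply, mapQ_apply, subtype_apply]
  exact (map_sum (mkQ _) _ _).symm

lemma piQuotientToQuotientISup_single [DecidableEq ι] (i : ι) (x : V i) :
    piQuotientToQuotientISup V W (Pi.single i (Quotient.mk x)) = Quotient.mk (x : M) := by
  rw [piQuotientToQuotientISup, LinearMap.sum_apply, Fintype.sum_eq_single i fun j hj => by
    rw [LinearMap.comp_apply, LinearMap.proj_apply, Pi.single_eq_of_ne hj, map_zero]]
  simp

lemma range_piQuotientToQuotientISup :
    LinearMap.range (piQuotientToQuotientISup V W) = (⨆ i, V i).map (⨆ i, W i).mkQ := by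
  classical
  refine le_antisymm ?_ ?_
  · rintro _ ⟨p, rfl⟩
    choose y hy using fun i => Quotient.mk_surjective _ (p i)
    obtain rfl : (fun i => Quotient.mk (y i)) = p := funext hy
    rw [piQuotientToQuotientISup_mk]
    exact mem_map_of_mem (sum_mem fun i _ => mem_iSup_of_mem i (y i).2)
  · rw [map_iSup]
    refine iSup_le fun i => ?_
    rintro _ ⟨x, hx, rfl⟩
    exact ⟨Pi.single i (Quotient.mk ⟨x, hx⟩), piQuotientToQuotientISup_single V W i ⟨x, hx⟩⟩

end PiQuotient

lemma injective_piQuotientToQuotientISup_rigidification [Fintype ι] [DecidableEq ι]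
    (V : ι → Submodule R M) :
    Function.Injective (piQuotientToQuotientISup V (rigidification V)) := by
  refine (injective_iff_map_eq_zero _).2 fun p hp => ?_
  choose y hy using fun i => Quotient.mk_surjective _ (p i)
  obtain rfl : (fun i => Quotient.mk (y i)) = p := funext hy
  rw [piQuotientToQuotientISup_mk, Quotient.mk_eq_zero] at hp
  exact funext fun i => (Quotient.mk_eq_zero _).2 (mem_rigidification_of_sum_mem V y hp i)

end Submodule

open Submodule in
/-- For an `n`-subspace `(V₀; V₁,…,Vₙ)` with rigidification `V_i^rig = V_i ∩ ∑_{j≠i} V_j`,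
there is a short exact sequence
`0 → ⊕ᵢ Vᵢ/Vᵢ^rig → V₀/(∑ᵢ Vᵢ^rig) → V₀/(∑ᵢ Vᵢ) → 0`,
where the first map is induced by the inclusions `Vᵢ ⊆ V₀` and the second map is the
natural projection. -/
theorem rigidification_ses (k : Type*) [Field k] (V₀ : Type*) [AddCommGroup V₀]
    [Module k V₀] (n : ℕ) (V : Fin n → Submodule k V₀) :
    let Vrig : Fin n → Submodule k V₀ := fun i => V i ⊓ ⨆ j ∈ ({i}ᶜ : Set (Fin n)), V j
    let Srig : Submodule k V₀ := ⨆ i, Vrig i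
    let S : Submodule k V₀ := ⨆ i, V i
    ∃ (f : (Π i, (↥(V i) ⧸ (Vrig i).comap (V i).subtype)) →ₗ[k] (V₀ ⧸ Srig))
      (g : (V₀ ⧸ Srig) →ₗ[k] (V₀ ⧸ S)),
      (∀ (i : Fin n) (x : V i),
        f (Pi.single i (Submodule.Quotient.mk x)) = Submodule.Quotient.mk (x : V₀)) ∧
      (∀ x : V₀, g (Submodule.Quotient.mk x) = Submodule.Quotient.mk x) ∧
      Function.Injective f ∧ Function.Surjective g ∧ LinearMap.range f = LinearMap.ker g := by
  intro Vrig Srig S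
  have hSrig : Srig ≤ S := iSup_mono fun _ => inf_le_left
  refine ⟨piQuotientToQuotientISup V (rigidification V), factor hSrig,
    piQuotientToQuotientISup_single V _, fun _ => rfl,
    injective_piQuotientToQuotientISup_rigidification V, factor_surjective hSrig, ?_⟩
  rw [ker_mapQ, comap_id]
  exact range_piQuotientToQuotientISup V _
end

section
/- Let k be a field and (V₀; V₁,…,Vₙ) an n-subspace (V_i ⊆ V₀ subspaces). If the n-subspace is indecomposable (not isomorphic to a direct sum of two nonzero n-subspaces) and fails to be rigid (i.e., either some V_i ⊄ ∑_{j≠i}V_j, or V₀ ≠ ∑_{i=1}^n V_i), then it is isomorphic, for some 1 ≤ i ≤ n, to the n-subspace with V₀ = k, V_i = k, V_j = 0 for j ≠ i, or to the n-subspace with V₀ = k and V_j = 0 for all j. -/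
private lemma decomp_aux {k V₀ : Type*} [Field k] [AddCommGroup V₀] [Module k V₀]
    {P Q Vj : Submodule k V₀} (hP : P ≤ Vj) (htop : P ⊔ Q = ⊤) :
    Vj = Vj ⊓ P ⊔ Vj ⊓ Q := by
  refine le_antisymm (fun x hx => ?_) (sup_le inf_le_left inf_le_left)
  have hxm : x ∈ P ⊔ Q := htop ▸ Submodule.mem_top
  obtain ⟨y, hy, z, hz, rfl⟩ := Submodule.mem_sup.mp hxm
  have hyV : y ∈ Vj := hP hy
  have hzV : z ∈ Vj := by
    have := Submodule.sub_mem Vj hx hyV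
    simpa using this
  exact Submodule.add_mem_sup ⟨hyV, hy⟩ ⟨hzV, hz⟩

/-- An indecomposable `n`-subspace `(V₀; V₁,…,Vₙ)` which is not rigid is isomorphic to
`(k; 0,…,0,k,0,…,0)` (with `k` in some position `i`) or to `(k; 0,…,0)`. -/
theorem indecomposable_not_rigid_classification (k : Type*) [Field k] (V₀ : Type*)
    [AddCommGroup V₀] [Module k V₀] (n : ℕ) (V : Fin n → Submodule k V₀)
    (hnz : (⊤ : Submodule k V₀) ≠ ⊥)
    (hindec : ¬ ∃ U₁ U₂ : Submodule k V₀, U₁ ≠ ⊥ ∧ U₂ ≠ ⊥ ∧ U₁ ⊓ U₂ = ⊥ ∧ U₁ ⊔ U₂ = ⊤ ∧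
        ∀ i, V i = (V i ⊓ U₁) ⊔ (V i ⊓ U₂))
    (hnotrigid : ¬ ((∀ i, V i ≤ ⨆ j ∈ ({i}ᶜ : Set (Fin n)), V j) ∧ (⨆ i, V i) = ⊤)) :
    ∃ e : V₀ ≃ₗ[k] k,
      (∀ j, (V j).map e.toLinearMap = ⊥) ∨
      (∃ i, ∀ j, (V j).map e.toLinearMap = if j = i then ⊤ else ⊥) := by
  classical
  rw [not_and_or] at hnotrigid
  rcases hnotrigid with h | h
  · -- some V i is not contained in the sup of the others
    push_neg at h
    obtain ⟨i, hi⟩ := h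
    obtain ⟨v, hvi, hvW⟩ := SetLike.not_le_iff_exists.mp hi
    set W : Submodule k V₀ := ⨆ j ∈ ({i}ᶜ : Set (Fin n)), V j with hW
    set P : Submodule k V₀ := Submodule.span k {v} with hP
    have hv0 : v ≠ 0 := fun h0 => hvW (h0 ▸ W.zero_mem)
    have hPV : P ≤ V i := Submodule.span_le.mpr (by simpa using hvi)
    have hPbot : P ≠ ⊥ := by
      simpa [hP, Submodule.span_singleton_eq_bot] using hv0
    obtain ⟨D, hD⟩ := Submodule.exists_isCompl (P ⊔ W)
    set Q : Submodule k V₀ := W ⊔ D with hQ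
    have hPQtop : P ⊔ Q = ⊤ := by
      rw [hQ, ← sup_assoc]; exact hD.sup_eq_top
    have hPQbot : P ⊓ Q = ⊥ := by
      rw [eq_bot_iff]
      rintro x ⟨hxP, hxQ⟩
      obtain ⟨w, hw, d, hd, rfl⟩ := Submodule.mem_sup.mp hxQ
      have hdmem : d ∈ (P ⊔ W) ⊓ D := by
        refine ⟨?_, hd⟩
        have hdw : d = (w + d) - w := by abel
        rw [hdw]
        exact Submodule.sub_mem _ (Submodule.mem_sup_left hxP) (Submodule.mem_sup_right hw)
      have hd0 : d = 0 := by
        have := hD.inf_eq_bot ▸ hdmem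
        simpa using this
      subst hd0
      obtain ⟨a, ha⟩ := Submodule.mem_span_singleton.mp (by simpa using hxP)
      rcases eq_or_ne a 0 with rfl | hane
      · simp [← ha]
      · exfalso
        apply hvW
        have : v = a⁻¹ • (w + 0) := by
          rw [add_zero, ← ha, smul_smul, inv_mul_cancel₀ hane, one_smul]
        rw [this]
        exact W.smul_mem _ (by simpa using hw)
    have hdecomp : ∀ j, V j = V j ⊓ P ⊔ V j ⊓ Q := by
      intro j
      by_cases hj : j = i
      · subst hj; exact decomp_aux hPV hPQtop
      · have hVW : V j ≤ W := le_iSup₂ (f := fun j _ => V j) j (by simp [hj])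
        have hle : V j ≤ Q := hVW.trans le_sup_left
        rw [inf_eq_left.mpr hle, sup_eq_right.mpr inf_le_left]
    have hQbot : Q = ⊥ := by
      by_contra hQne
      exact hindec ⟨P, Q, hPbot, hQne, hPQbot, hPQtop, hdecomp⟩
    have hWbot : W = ⊥ := le_bot_iff.mp (le_sup_left.trans hQbot.le)
    have hPtop : P = ⊤ := by rw [← hPQtop, hQbot, sup_bot_eq]
    let e₀ : k ≃ₗ[k] V₀ :=
      (LinearEquiv.toSpanNonzeroSingleton k V₀ v hv0).trans (LinearEquiv.ofTop _ hPtop)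
    refine ⟨e₀.symm, Or.inr ⟨i, fun j => ?_⟩⟩
    by_cases hj : j = i
    · subst hj
      have hVtop : V j = ⊤ := le_antisymm le_top (hPtop ▸ hPV)
      simp [hVtop, Submodule.map_top, LinearEquiv.range]
    · have hVbot : V j = ⊥ := by
        have hVW : V j ≤ W := le_iSup₂ (f := fun j _ => V j) j (by simp [hj])
        exact le_bot_iff.mp (hVW.trans hWbot.le)
      rw [hVbot, Submodule.map_bot, if_neg hj]
  · -- the sup of all V i is not ⊤
    set S : Submodule k V₀ := ⨆ i, V i with hS
    obtain ⟨D, hD⟩ := Submodule.exists_isCompl S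
    have hDbot : D ≠ ⊥ := by
      intro hd
      exact h (by rw [← hD.sup_eq_top, hd, sup_bot_eq])
    have hSbot : S = ⊥ := by
      by_contra hSne
      refine hindec ⟨S, D, hSne, hDbot, hD.inf_eq_bot, hD.sup_eq_top, fun j => ?_⟩
      rw [inf_eq_left.mpr (le_iSup V j)]
      exact (sup_eq_left.mpr inf_le_left).symm
    have hVbot : ∀ j, V j = ⊥ := fun j => le_bot_iff.mp ((le_iSup V j).trans hSbot.le)
    have hex : ∃ v : V₀, v ≠ 0 := by
      by_contra hc
      push_neg at hc
      exact hnz (by ext x; simp [hc x])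
    obtain ⟨v, hv0⟩ := hex
    set P : Submodule k V₀ := Submodule.span k {v} with hP
    have hPbot : P ≠ ⊥ := by
      simpa [hP, Submodule.span_singleton_eq_bot] using hv0
    obtain ⟨D', hD'⟩ := Submodule.exists_isCompl P
    have hD'bot : D' = ⊥ := by
      by_contra hd
      exact hindec ⟨P, D', hPbot, hd, hD'.inf_eq_bot, hD'.sup_eq_top,
        fun j => by simp [hVbot j]⟩
    have hPtop : P = ⊤ := by rw [← hD'.sup_eq_top, hD'bot, sup_bot_eq]
    let e₀ : k ≃ₗ[k] V₀ :=
      (LinearEquiv.toSpanNonzeroSingleton k V₀ v hv0).trans (LinearEquiv.ofTop _ hPtop)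
    exact ⟨e₀.symm, Or.inl fun j => by rw [hVbot j]; exact Submodule.map_bot _⟩
end

section
/- Let k be a field and (V₀; V₁,…,Vₙ) an n-subspace. Then (V₀; V₁,…,Vₙ) is isomorphic to the direct sum of its rigidification (V₀^rig; V₁^rig,…,Vₙ^rig) and n 'trivial-type' n-subspaces: for i = 1, the n-subspace with ambient space (V₀/∑_{j=1}^n V_j) ⊕ (V₁/V₁^rig), first subspace V₁/V₁^rig, and other subspaces 0; and for 1 < i ≤ n, the n-subspace with ambient space V_i/V_i^rig, i-th subspace equal to the whole ambient space, and other subspaces 0. -/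
/-- Every `n`-subspace is isomorphic to the direct sum of its rigidification
`(∑ᵢ Vᵢ^rig; V₁^rig,…,Vₙ^rig)` and `n` trivial-type `n`-subspaces: for the distinguished
index the summand has ambient space `(V₀/∑ⱼ Vⱼ) ⊕ (Vᵢ/Vᵢ^rig)` with subspace `Vᵢ/Vᵢ^rig`
placed at position `i`, and for the other indices the summand is `Vᵢ/Vᵢ^rig` with the `i`-th
subspace equal to the whole ambient space and the others `0`. -/
theorem nsubspace_rigid_decomposition (k : Type*) [Field k] (V₀ : Type*) [AddCommGroup V₀]
    [Module k V₀] (n : ℕ) (V : Fin n → Submodule k V₀) :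
    let Vrig : Fin n → Submodule k V₀ := fun i => V i ⊓ ⨆ j ∈ ({i}ᶜ : Set (Fin n)), V j
    let Srig : Submodule k V₀ := ⨆ i, Vrig i
    let S : Submodule k V₀ := ⨆ i, V i
    ∃ e : V₀ ≃ₗ[k] (↥Srig × (V₀ ⧸ S) × Π i, (↥(V i) ⧸ (Vrig i).comap (V i).subtype)),
      ∀ i, (V i).map e.toLinearMap =
        ((Vrig i).comap Srig.subtype).prod
          ((⊥ : Submodule k (V₀ ⧸ S)).prod
            (Submodule.pi Set.univ fun j => if j = i then ⊤ else ⊥)) := by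
  intro Vrig Srig S
  classical
  -- complements of the rigid part inside each `V i`
  choose W' hW' using fun i => Submodule.exists_isCompl ((Vrig i).comap (V i).subtype)
  obtain ⟨T, hT⟩ := Submodule.exists_isCompl S
  -- the complements, viewed inside `V₀`
  let W : Fin n → Submodule k V₀ := fun i => (W' i).map (V i).subtype
  have hWleV : ∀ i, W i ≤ V i := fun i => Submodule.map_subtype_le _ _
  have hVrig_le : ∀ i, Vrig i ≤ V i := fun i => inf_le_left
  have hVrig_le_Srig : ∀ i, Vrig i ≤ Srig := fun i => le_iSup _ i
  have hV_le_S : ∀ i, V i ≤ S := fun i => le_iSup _ i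
  have hSrig_le_S : Srig ≤ S := iSup_le fun j => (hVrig_le j).trans (hV_le_S j)
  have hVrig_eq_map : ∀ i, Vrig i = ((Vrig i).comap (V i).subtype).map (V i).subtype := by
    intro i
    rw [Submodule.map_comap_subtype]
    exact (inf_eq_right.mpr (hVrig_le i)).symm
  have hdisj : ∀ i, Disjoint (Vrig i) (W i) := by
    intro i
    rw [hVrig_eq_map i, Submodule.disjoint_def]
    rintro x ⟨a, haV, rfl⟩ ⟨b, hbW, hba⟩
    have hba' : b = a := Subtype.ext hba
    subst hba'
    have h0 : b = 0 := Submodule.disjoint_def.mp (hW' i).disjoint b haV hbW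
    rw [h0]; simp
  have hsup : ∀ i, Vrig i ⊔ W i = V i := by
    intro i
    rw [hVrig_eq_map i, ← Submodule.map_sup, (hW' i).codisjoint.eq_top, Submodule.map_top,
      Submodule.range_subtype]
  -- section of the quotient by `S`
  let σ : (V₀ ⧸ S) →ₗ[k] V₀ :=
    T.subtype ∘ₗ (Submodule.quotientEquivOfIsCompl S T hT).toLinearMap
  have hσ_inj : Function.Injective σ :=
    Subtype.val_injective.comp (Submodule.quotientEquivOfIsCompl S T hT).injective
  have hσ_mem : ∀ t, σ t ∈ T := fun t => ((Submodule.quotientEquivOfIsCompl S T hT) t).2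
  have hσ_range : ∀ x ∈ T, ∃ t, σ t = x := by
    intro x hx
    refine ⟨(Submodule.quotientEquivOfIsCompl S T hT).symm ⟨x, hx⟩, ?_⟩
    show ((Submodule.quotientEquivOfIsCompl S T hT)
      ((Submodule.quotientEquivOfIsCompl S T hT).symm ⟨x, hx⟩) : V₀) = x
    rw [LinearEquiv.apply_symm_apply]
  -- sections of the quotients `V i ⧸ Vrig i`
  let eqi : ∀ i, (↥(V i) ⧸ (Vrig i).comap (V i).subtype) ≃ₗ[k] W' i :=
    fun i => Submodule.quotientEquivOfIsCompl _ _ (hW' i)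
  let τ : ∀ i, (↥(V i) ⧸ (Vrig i).comap (V i).subtype) →ₗ[k] V₀ :=
    fun i => (V i).subtype ∘ₗ (W' i).subtype ∘ₗ (eqi i).toLinearMap
  have hτ_inj : ∀ i, Function.Injective (τ i) := fun i =>
    Subtype.val_injective.comp (Subtype.val_injective.comp (eqi i).injective)
  have hτ_memW : ∀ i q, τ i q ∈ W i := fun i q => ⟨_, ((eqi i) q).2, rfl⟩
  have hτ_memV : ∀ i q, τ i q ∈ V i := fun i q => hWleV i (hτ_memW i q)
  have hτ_symm : ∀ i (b : ↥(V i)) (hb : b ∈ W' i), τ i ((eqi i).symm ⟨b, hb⟩) = (b : V₀) := by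
    intro i b hb
    show ((W' i).subtype ((eqi i) ((eqi i).symm ⟨b, hb⟩)) : V₀) = (b : V₀)
    rw [LinearEquiv.apply_symm_apply]
    rfl
  -- the candidate inverse of `e`
  let g : (↥Srig × (V₀ ⧸ S) × Π i, (↥(V i) ⧸ (Vrig i).comap (V i).subtype)) →ₗ[k] V₀ :=
    Srig.subtype.coprod (σ.coprod (∑ i, (τ i) ∘ₗ LinearMap.proj i))
  have hg_apply : ∀ s t w, g (s, t, w) = (s : V₀) + (σ t + ∑ i, τ i (w i)) := by
    intro s t w
    simp [g, LinearMap.coprod_apply, LinearMap.sum_apply]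
  -- sums of single elements
  have hsingle : ∀ i (q : ↥(V i) ⧸ (Vrig i).comap (V i).subtype),
      ∑ j, τ j (Pi.single (M := fun j => ↥(V j) ⧸ (Vrig j).comap (V j).subtype) i q j)
        = τ i q := by
    intro i q
    rw [Finset.sum_eq_single i (fun j _ hj => by rw [Pi.single_eq_of_ne hj, map_zero])
      (by simp), Pi.single_eq_same]
  -- the big complement sum facts
  have hSrig_le_bi : ∀ i, Srig ≤ ⨆ j ∈ ({i}ᶜ : Set (Fin n)), V j := by
    intro i
    refine iSup_le fun j => ?_
    by_cases hj : j = i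
    · subst hj; exact inf_le_right
    · exact le_trans (hVrig_le j) (le_iSup₂ (f := fun j _ => V j) j hj)
  have hV_le_bi : ∀ i j, j ≠ i → V j ≤ ⨆ j ∈ ({i}ᶜ : Set (Fin n)), V j := by
    intro i j hj
    exact le_iSup₂ (f := fun j _ => V j) j hj
  -- injectivity of g
  have hg_inj : Function.Injective g := by
    rw [← LinearMap.ker_eq_bot, eq_bot_iff]
    rintro ⟨s, t, w⟩ hx
    have h0 : (s : V₀) + (σ t + ∑ i, τ i (w i)) = 0 := by
      rw [← hg_apply]; exact hx
    -- first, σ t = 0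
    have hst : σ t ∈ S := by
      have hE : σ t = -((s : V₀) + ∑ i, τ i (w i)) := by
        linear_combination (norm := abel) h0
      rw [hE]
      exact neg_mem (add_mem (hSrig_le_S s.2)
        (sum_mem fun i _ => hV_le_S i (hτ_memV i (w i))))
    have ht0 : t = 0 := by
      have hz : σ t = 0 := Submodule.disjoint_def.mp hT.disjoint _ hst (hσ_mem t)
      exact hσ_inj (by simpa using hz)
    rw [ht0, map_zero, zero_add] at h0
    -- now each w i = 0
    have hw0 : ∀ i, w i = 0 := by
      intro i
      have hsum : τ i (w i) = -((s : V₀) + ∑ j ∈ Finset.univ.erase i, τ j (w j)) := by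
        have h1 := Finset.add_sum_erase Finset.univ (fun j => τ j (w j)) (Finset.mem_univ i)
        rw [← h1] at h0
        linear_combination (norm := abel) h0
      have hmem : τ i (w i) ∈ ⨆ j ∈ ({i}ᶜ : Set (Fin n)), V j := by
        rw [hsum]
        refine neg_mem (add_mem (hSrig_le_bi i s.2) (sum_mem fun j hj => ?_))
        exact hV_le_bi i j (Finset.ne_of_mem_erase hj) (hτ_memV j (w j))
      have hVrigmem : τ i (w i) ∈ Vrig i := ⟨hτ_memV i (w i), hmem⟩
      have hz : τ i (w i) = 0 :=
        Submodule.disjoint_def.mp (hdisj i) _ hVrigmem (hτ_memW i (w i))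
      exact hτ_inj i (by simpa using hz)
    have hs0 : (s : V₀) = 0 := by
      have hτ0 : ∀ i, τ i (w i) = 0 := fun i => by rw [hw0 i, map_zero]
      simpa [hτ0] using h0
    rw [Submodule.mem_bot]
    exact Prod.ext (Subtype.ext hs0) (Prod.ext ht0 (funext hw0))
  -- surjectivity of g
  have hg_surj : Function.Surjective g := by
    rw [← LinearMap.range_eq_top, eq_top_iff]
    have hSrig_le : Srig ≤ LinearMap.range g := by
      intro x hx
      exact ⟨(⟨x, hx⟩, 0, 0), by simp [hg_apply]⟩
    have hT_le : T ≤ LinearMap.range g := by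
      intro x hx
      obtain ⟨t, ht⟩ := hσ_range x hx
      exact ⟨(0, t, 0), by simp [hg_apply, ht]⟩
    have hW_le : ∀ i, W i ≤ LinearMap.range g := by
      rintro i x ⟨b, hb, rfl⟩
      refine ⟨(0, 0, Pi.single i ((eqi i).symm ⟨b, hb⟩)), ?_⟩
      rw [hg_apply, hsingle, hτ_symm i b hb]
      simp
    have hV_le : ∀ i, V i ≤ LinearMap.range g := by
      intro i
      rw [← hsup i]
      exact sup_le ((hVrig_le_Srig i).trans hSrig_le) (hW_le i)
    have hS_le : S ≤ LinearMap.range g := iSup_le hV_le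
    rw [← hT.codisjoint.eq_top]
    exact sup_le hS_le hT_le
  -- assemble the equivalence
  refine ⟨(LinearEquiv.ofBijective g ⟨hg_inj, hg_surj⟩).symm, fun i => ?_⟩
  have key : (((Vrig i).comap Srig.subtype).prod
          ((⊥ : Submodule k (V₀ ⧸ S)).prod
            (Submodule.pi Set.univ fun j => if j = i then ⊤ else ⊥))).map g = V i := by
    apply le_antisymm
    · rintro x ⟨⟨s, t, w⟩, hmem, rfl⟩
      rw [SetLike.mem_coe, Submodule.mem_prod] at hmem
      obtain ⟨hs, hmem2⟩ := hmem
      rw [Submodule.mem_prod] at hmem2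
      obtain ⟨ht, hw⟩ := hmem2
      have ht0 : t = 0 := by simpa using ht
      have hw0 : ∀ j, j ≠ i → w j = 0 := by
        intro j hj
        have hj' := (Submodule.mem_pi.mp hw) j (Set.mem_univ j)
        rw [if_neg hj] at hj'
        simpa using hj'
      have hsum : ∑ j, τ j (w j) = τ i (w i) :=
        Finset.sum_eq_single i (fun j _ hj => by rw [hw0 j hj, map_zero]) (by simp)
      rw [hg_apply, ht0, map_zero, zero_add, hsum]
      exact add_mem (hVrig_le i hs) (hτ_memV i (w i))
    · intro v hv
      have hmem : (⟨v, hv⟩ : V i) ∈ ((Vrig i).comap (V i).subtype) ⊔ W' i := by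
        rw [(hW' i).codisjoint.eq_top]; trivial
      obtain ⟨a, ha, b, hb, hab⟩ := Submodule.mem_sup.mp hmem
      refine ⟨(⟨(a : V₀), hVrig_le_Srig i ha⟩, 0, Pi.single i ((eqi i).symm ⟨b, hb⟩)), ?_, ?_⟩
      · rw [SetLike.mem_coe, Submodule.mem_prod]
        refine ⟨ha, ?_⟩
        rw [Submodule.mem_prod]
        refine ⟨Submodule.mem_bot _ |>.mpr rfl, Submodule.mem_pi.mpr fun j _ => ?_⟩
        by_cases hj : j = i
        · rw [if_pos hj]; trivial
        · rw [if_neg hj]; simp [Pi.single_eq_of_ne hj]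
      · rw [hg_apply, hsingle, hτ_symm i b hb, map_zero, zero_add]
        have := congrArg Subtype.val hab
        simpa using this
  exact (Submodule.map_symm_eq_iff (LinearEquiv.ofBijective g ⟨hg_inj, hg_surj⟩)).mpr key
end

section
/- Let k be a field, and let V₀ ⊇ V₁ ⊇ ⋯ be a decreasing chain of subspaces with V₀ the union of an increasing chain of finite-dimensional subspaces V₀⁰ ⊆ V₀¹ ⊆ ⋯, and set V∞ = ⋂_m V_m, Vⁿ_m = V₀ⁿ ∩ V_m, V₀^{-1} = 0. For each pair (n,m) choose a finite subset {a^l_{nm} : 1 ≤ l ≤ r_{nm}} ⊆ Vⁿ_m whose image is a basis of Vⁿ_m / (Vⁿ⁻¹_m + Vⁿ_{m+1}). Then for all m ≤ p and all n, the images of {a^{l}_{ij} : i ≤ n, m ≤ j < p, 1 ≤ l ≤ r_{ij}} form a basis of Vⁿ_m / Vⁿ_p. -/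
/-- Basis-adaptation lemma, part (1).  With `Vⁿ_m = V₀ⁿ ∩ V_m` (and `V⁻¹_m = 0`), choose for
each `(n,m)` finitely many elements `a^l_{nm} ∈ Vⁿ_m` whose images form a basis of
`Vⁿ_m/(Vⁿ⁻¹_m + Vⁿ_{m+1})` (expressed below by a spanning condition modulo
`prev n m = Vⁿ⁻¹_m + Vⁿ_{m+1}` and linear independence modulo `prev n m`).  Then for all
`m ≤ p` and all `n`, the images of `{a^l_{ij} : i ≤ n, m ≤ j < p, l < r i j}` form a basis
of `Vⁿ_m / Vⁿ_p` (again expressed as spanning modulo `Vⁿ_p` together with linear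
independence modulo `Vⁿ_p`). -/
theorem basis_adaptation (k : Type*) [Field k] (E : Type*) [AddCommGroup E] [Module k E]
    (V : ℕ → Submodule k E) (hV : Antitone V)
    (V0 : ℕ → Submodule k E) (hV0 : Monotone V0)
    (hfin : ∀ n, FiniteDimensional k (V0 n)) (hunion : ⨆ n, V0 n = ⊤)
    (Vnm : ℕ → ℕ → Submodule k E) (hVnm : ∀ n m, Vnm n m = V0 n ⊓ V m)
    (prev : ℕ → ℕ → Submodule k E)
    (hprev : ∀ n m, prev n m = (if n = 0 then ⊥ else Vnm (n - 1) m) ⊔ Vnm n (m + 1))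
    (r : ℕ → ℕ → ℕ) (a : ℕ → ℕ → ℕ → E)
    (hmem : ∀ n m l, l < r n m → a n m l ∈ Vnm n m)
    (hspan : ∀ n m,
      Vnm n m ≤ Submodule.span k (Set.range fun l : Fin (r n m) => a n m (l : ℕ)) ⊔ prev n m)
    (hindep : ∀ n m (c : Fin (r n m) →₀ k),
      (c.sum fun l t => t • a n m (l : ℕ)) ∈ prev n m → c = 0) :
    ∀ n m p, m ≤ p →
      (Vnm n m ≤
          Submodule.span k
            {x : E | ∃ i j l, i ≤ n ∧ m ≤ j ∧ j < p ∧ l < r i j ∧ x = a i j l} ⊔ Vnm n p) ∧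
      (∀ c : {x : ℕ × ℕ × ℕ // x.1 ≤ n ∧ m ≤ x.2.1 ∧ x.2.1 < p ∧ x.2.2 < r x.1 x.2.1} →₀ k,
        (c.sum fun x t => t • a x.1.1 x.1.2.1 x.1.2.2) ∈ Vnm n p → c = 0) := by
  classical
  have hmono : ∀ {n₁ n₂ m₁ m₂ : ℕ}, n₁ ≤ n₂ → m₂ ≤ m₁ → Vnm n₁ m₁ ≤ Vnm n₂ m₂ := by
    intro n₁ n₂ m₁ m₂ h1 h2
    rw [hVnm, hVnm]
    exact inf_le_inf (hV0 h1) (hV h2)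
  have hamem : ∀ {i j l n m : ℕ}, i ≤ n → m ≤ j → l < r i j → a i j l ∈ Vnm n m :=
    fun h1 h2 hl => hmono h1 h2 (hmem _ _ _ hl)
  -- sums of chosen elements lie in the appropriate `Vnm`
  have hsum_mem : ∀ (n m : ℕ) (s : Finset (ℕ × ℕ × ℕ)) (g : ℕ × ℕ × ℕ → k),
      (∀ x ∈ s, x.1 ≤ n ∧ m ≤ x.2.1 ∧ x.2.2 < r x.1 x.2.1) →
      (∑ x ∈ s, g x • a x.1 x.2.1 x.2.2) ∈ Vnm n m := by
    intro n m s g hs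
    refine Submodule.sum_mem _ fun x hx => Submodule.smul_mem _ _ ?_
    exact hamem (hs x hx).1 (hs x hx).2.1 (hs x hx).2.2
  -- the sum of a filtered finsupp as a finset sum
  have hfiltsum : ∀ (P : ℕ × ℕ × ℕ → Prop) [DecidablePred P] (c : (ℕ × ℕ × ℕ) →₀ k),
      ((c.filter P).sum fun x t => t • a x.1 x.2.1 x.2.2)
        = ∑ x ∈ c.support.filter P, c x • a x.1 x.2.1 x.2.2 := by
    intro P _ c
    rw [Finsupp.sum, Finsupp.support_filter]
    refine Finset.sum_congr rfl fun x hx => ?_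
    rw [Finsupp.filter_apply_pos _ _ (Finset.mem_filter.mp hx).2]
  -- the sum over a single "row" (fixed `n`, `m`) rewritten as a `Fin`-indexed finsupp sum
  have rowsum : ∀ (n m : ℕ) (c : (ℕ × ℕ × ℕ) →₀ k),
      (∀ x ∈ c.support, x.1 = n → x.2.1 = m → x.2.2 < r n m) →
      (∑ x ∈ c.support.filter (fun x => x.1 = n ∧ x.2.1 = m), c x • a x.1 x.2.1 x.2.2)
        = (Finsupp.equivFunOnFinite.symm fun l : Fin (r n m) => c (n, m, (l : ℕ))).sum
            fun l t => t • a n m (l : ℕ) := by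
    intro n m c hc
    rw [Finsupp.sum_fintype (g := fun (l : Fin (r n m)) (t : k) => t • a n m (l : ℕ))
      _ (fun l => zero_smul k _)]
    simp only [Finsupp.equivFunOnFinite_symm_apply_apply]
    rw [Fin.sum_univ_eq_sum_range (fun l => c (n, m, l) • a n m l) (r n m)]
    rw [Finset.sum_subset
        (show c.support.filter (fun x => x.1 = n ∧ x.2.1 = m)
            ⊆ (Finset.range (r n m)).image (fun l => ((n, m, l) : ℕ × ℕ × ℕ)) from ?_) ?_]
    · rw [Finset.sum_image (fun x _ y _ h => by simpa using h)]
    · intro x hx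
      obtain ⟨hxs, h1, h2⟩ := Finset.mem_filter.mp hx
      refine Finset.mem_image.mpr ⟨x.2.2, Finset.mem_range.mpr (hc x hxs h1 h2), ?_⟩
      obtain ⟨i, j, l⟩ := x
      simp_all
    · intro x hxT hx
      obtain ⟨l, _, rfl⟩ := Finset.mem_image.mp hxT
      have : (n, m, l) ∉ c.support := fun hs => hx (Finset.mem_filter.mpr ⟨hs, rfl, rfl⟩)
      rw [Finsupp.notMem_support_iff.mp this, zero_smul]
  -- killing a row: if the row sum lies in `prev n m` then the row coefficients vanish
  have killrow : ∀ (n m : ℕ) (c : (ℕ × ℕ × ℕ) →₀ k),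
      (∀ x ∈ c.support, x.1 = n → x.2.1 = m → x.2.2 < r n m) →
      (∑ x ∈ c.support.filter (fun x => x.1 = n ∧ x.2.1 = m),
          c x • a x.1 x.2.1 x.2.2) ∈ prev n m →
      ∀ x ∈ c.support, x.1 = n → x.2.1 = m → False := by
    intro n m c hc hsum
    rw [rowsum n m c hc] at hsum
    have h0 := hindep n m _ hsum
    rintro ⟨i, j, l⟩ hx rfl rfl
    have hl : l < r i j := hc _ hx rfl rfl
    have := DFunLike.congr_fun h0 ⟨l, hl⟩
    simp only [Finsupp.equivFunOnFinite_symm_apply_apply, Finsupp.coe_zero,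
      Pi.zero_apply] at this
    exact Finsupp.mem_support_iff.mp hx this
  -- column lemma: a combination supported on column `m`, rows `≤ I`,
  -- lying in `Vnm I (m+1)`, is trivial
  have col : ∀ (m I : ℕ) (c : (ℕ × ℕ × ℕ) →₀ k),
      (∀ x ∈ c.support, x.1 ≤ I ∧ x.2.1 = m ∧ x.2.2 < r x.1 m) →
      ((c.sum fun x t => t • a x.1 x.2.1 x.2.2) ∈ Vnm I (m + 1)) → c = 0 := by
    intro m I
    induction I with
    | zero =>
      intro c hc hS
      have hfull : c.support.filter (fun x => x.1 = 0 ∧ x.2.1 = m) = c.support :=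
        Finset.filter_true_of_mem fun x hx =>
          ⟨Nat.le_zero.mp (hc x hx).1, (hc x hx).2.1⟩
      have hrc : ∀ x ∈ c.support, x.1 = 0 → x.2.1 = m → x.2.2 < r 0 m := by
        intro x hx h1 h2
        have := (hc x hx).2.2
        rwa [h1] at this
      have hmemprev : (∑ x ∈ c.support.filter (fun x => x.1 = 0 ∧ x.2.1 = m),
          c x • a x.1 x.2.1 x.2.2) ∈ prev 0 m := by
        rw [hfull, hprev]
        exact Submodule.mem_sup_right hS
      have hk := killrow 0 m c hrc hmemprev
      ext x
      by_cases hx : x ∈ c.support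
      · exact ((hk x hx (Nat.le_zero.mp (hc x hx).1) (hc x hx).2.1)).elim
      · simpa using Finsupp.notMem_support_iff.mp hx
    | succ I ih =>
      intro c hc hS
      set P : ℕ × ℕ × ℕ → Prop := fun x => x.1 = I + 1 ∧ x.2.1 = m with hPdef
      have hsplit : (∑ x ∈ c.support.filter P, c x • a x.1 x.2.1 x.2.2)
          + (∑ x ∈ c.support.filter (fun x => ¬ P x), c x • a x.1 x.2.1 x.2.2)
          = c.sum fun x t => t • a x.1 x.2.1 x.2.2 :=
        Finset.sum_filter_add_sum_filter_not _ _ _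
      have hnP : ∀ x ∈ c.support, ¬ P x → x.1 ≤ I := by
        intro x hx hpx
        have h2 := (hc x hx).2.1
        have h1 := (hc x hx).1
        by_contra h
        exact hpx ⟨by omega, h2⟩
      have hw : (∑ x ∈ c.support.filter (fun x => ¬ P x), c x • a x.1 x.2.1 x.2.2)
          ∈ Vnm I m := by
        refine hsum_mem I m _ _ fun x hx => ?_
        obtain ⟨hxs, hpx⟩ := Finset.mem_filter.mp hx
        refine ⟨hnP x hxs hpx, ?_, ?_⟩
        · rw [(hc x hxs).2.1]
        · have := (hc x hxs).2.2; rwa [(hc x hxs).2.1]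
      have hrc : ∀ x ∈ c.support, x.1 = I + 1 → x.2.1 = m → x.2.2 < r (I + 1) m := by
        intro x hx h1 h2
        have := (hc x hx).2.2
        rwa [h1] at this
      have hu_mem : (∑ x ∈ c.support.filter P, c x • a x.1 x.2.1 x.2.2)
          ∈ prev (I + 1) m := by
        have hu : (∑ x ∈ c.support.filter P, c x • a x.1 x.2.1 x.2.2)
            = (c.sum fun x t => t • a x.1 x.2.1 x.2.2)
              - ∑ x ∈ c.support.filter (fun x => ¬ P x), c x • a x.1 x.2.1 x.2.2 :=
          eq_sub_of_add_eq hsplit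
        rw [hu, hprev, if_neg (Nat.succ_ne_zero I)]
        simp only [Nat.add_sub_cancel]
        exact Submodule.sub_mem _ (Submodule.mem_sup_right hS) (Submodule.mem_sup_left hw)
      have hk := killrow (I + 1) m c hrc hu_mem
      have hPempty : c.support.filter P = ∅ :=
        Finset.filter_eq_empty_iff.mpr fun {x} hx hpx => (hk x hx hpx.1 hpx.2).elim
      have hwS : (∑ x ∈ c.support.filter (fun x => ¬ P x), c x • a x.1 x.2.1 x.2.2)
          = c.sum fun x t => t • a x.1 x.2.1 x.2.2 := by
        rw [← hsplit, hPempty, Finset.sum_empty, zero_add]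
      have hw2 : (∑ x ∈ c.support.filter (fun x => ¬ P x), c x • a x.1 x.2.1 x.2.2)
          ∈ Vnm I (m + 1) := by
        rw [hVnm]
        refine Submodule.mem_inf.mpr ⟨?_, ?_⟩
        · have := hw; rw [hVnm] at this; exact (Submodule.mem_inf.mp this).1
        · have := hS; rw [hVnm] at this
          rw [hwS]
          exact (Submodule.mem_inf.mp this).2
      have hcc := ih (c.filter fun x => ¬ P x) ?_ ?_
      · ext x
        by_cases hx : x ∈ c.support
        · by_cases hpx : P x
          · exact (hk x hx hpx.1 hpx.2).elim
          · have := DFunLike.congr_fun hcc x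
            rw [Finsupp.filter_apply_pos (fun x => ¬ P x) _ hpx] at this
            simpa using this
        · simpa using Finsupp.notMem_support_iff.mp hx
      · intro x hx
        rw [Finsupp.support_filter, Finset.mem_filter] at hx
        exact ⟨hnP x hx.1 hx.2, (hc x hx.1).2.1, (hc x hx.1).2.2⟩
      · rw [hfiltsum]
        exact hw2
  -- independence over the whole triangle of indices
  have indep_aux : ∀ (N n m p : ℕ), m ≤ p → p - m ≤ N →
      ∀ c : (ℕ × ℕ × ℕ) →₀ k,
      (∀ x ∈ c.support, x.1 ≤ n ∧ m ≤ x.2.1 ∧ x.2.1 < p ∧ x.2.2 < r x.1 x.2.1) →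
      ((c.sum fun x t => t • a x.1 x.2.1 x.2.2) ∈ Vnm n p) → c = 0 := by
    intro N
    induction N with
    | zero =>
      intro n m p hmp hN c hc _
      have : c.support = ∅ :=
        Finset.eq_empty_of_forall_notMem fun x hx => by
          have := hc x hx; omega
      exact Finsupp.support_eq_empty.mp this
    | succ N ihN =>
      intro n m p hmp hN c hc hS
      by_cases hpm : p ≤ m
      · have : c.support = ∅ :=
          Finset.eq_empty_of_forall_notMem fun x hx => by
            have := hc x hx; omega
        exact Finsupp.support_eq_empty.mp this
      · have hm1 : m + 1 ≤ p := by omega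
        set P : ℕ × ℕ × ℕ → Prop := fun x => x.2.1 = m with hPdef
        have hsplit : (∑ x ∈ c.support.filter P, c x • a x.1 x.2.1 x.2.2)
            + (∑ x ∈ c.support.filter (fun x => ¬ P x), c x • a x.1 x.2.1 x.2.2)
            = c.sum fun x t => t • a x.1 x.2.1 x.2.2 :=
          Finset.sum_filter_add_sum_filter_not _ _ _
        have hS2 : (∑ x ∈ c.support.filter (fun x => ¬ P x), c x • a x.1 x.2.1 x.2.2)
            ∈ Vnm n (m + 1) := by
          refine hsum_mem n (m + 1) _ _ fun x hx => ?_
          obtain ⟨hxs, hpx⟩ := Finset.mem_filter.mp hx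
          have h := hc x hxs
          exact ⟨h.1, by omega, h.2.2.2⟩
        have hS' : (c.sum fun x t => t • a x.1 x.2.1 x.2.2) ∈ Vnm n (m + 1) :=
          hmono le_rfl hm1 hS
        have hS1 : (∑ x ∈ c.support.filter P, c x • a x.1 x.2.1 x.2.2)
            ∈ Vnm n (m + 1) := by
          have hu : (∑ x ∈ c.support.filter P, c x • a x.1 x.2.1 x.2.2)
              = (c.sum fun x t => t • a x.1 x.2.1 x.2.2)
                - ∑ x ∈ c.support.filter (fun x => ¬ P x), c x • a x.1 x.2.1 x.2.2 :=
            eq_sub_of_add_eq hsplit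
          rw [hu]
          exact Submodule.sub_mem _ hS' hS2
        have hc1 : c.filter P = 0 := by
          refine col m n (c.filter P) ?_ ?_
          · intro x hx
            rw [Finsupp.support_filter, Finset.mem_filter] at hx
            have h := hc x hx.1
            refine ⟨h.1, hx.2, ?_⟩
            have := h.2.2.2
            rwa [hx.2] at this
          · rw [hfiltsum]
            exact hS1
        have hP0 : ∀ x ∈ c.support, P x → False := by
          intro x hx hpx
          have := DFunLike.congr_fun hc1 x
          rw [Finsupp.filter_apply_pos P _ hpx] at this
          simp only [Finsupp.coe_zero, Pi.zero_apply] at this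
          exact Finsupp.mem_support_iff.mp hx this
        have hPempty : c.support.filter P = ∅ :=
          Finset.filter_eq_empty_iff.mpr fun {x} hx hpx => hP0 x hx hpx
        have hwS : (∑ x ∈ c.support.filter (fun x => ¬ P x), c x • a x.1 x.2.1 x.2.2)
            = c.sum fun x t => t • a x.1 x.2.1 x.2.2 := by
          rw [← hsplit, hPempty, Finset.sum_empty, zero_add]
        have hc2 : c.filter (fun x => ¬ P x) = 0 := by
          refine ihN n (m + 1) p hm1 (by omega) _ ?_ ?_
          · intro x hx
            rw [Finsupp.support_filter, Finset.mem_filter] at hx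
            have h := hc x hx.1
            exact ⟨h.1, by have := h.2.1; have := hx.2; omega, h.2.2.1, h.2.2.2⟩
          · rw [hfiltsum, hwS]
            exact hS
        ext x
        by_cases hx : x ∈ c.support
        · by_cases hpx : P x
          · exact (hP0 x hx hpx).elim
          · have := DFunLike.congr_fun hc2 x
            rw [Finsupp.filter_apply_pos (fun x => ¬ P x) _ hpx] at this
            simpa using this
        · simpa using Finsupp.notMem_support_iff.mp hx
  -- spanning
  have span_aux : ∀ (N n m p : ℕ), m ≤ p → n + (p - m) ≤ N →
      Vnm n m ≤ Submodule.span k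
          {x : E | ∃ i j l, i ≤ n ∧ m ≤ j ∧ j < p ∧ l < r i j ∧ x = a i j l} ⊔ Vnm n p := by
    intro N
    induction N with
    | zero =>
      intro n m p hmp hN
      have hpm : p = m := by omega
      subst hpm
      exact le_sup_right
    | succ N ihN =>
      intro n m p hmp hN
      by_cases hpm : p = m
      · subst hpm; exact le_sup_right
      · have hm1 : m + 1 ≤ p := by omega
        refine le_trans (hspan n m) (sup_le ?_ ?_)
        · rw [Submodule.span_le]
          rintro x ⟨l, rfl⟩
          exact Submodule.mem_sup_left (Submodule.subset_span
            ⟨n, m, l, le_rfl, le_rfl, by omega, l.2, rfl⟩)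
        · rw [hprev]
          refine sup_le ?_ ?_
          · by_cases hn : n = 0
            · rw [if_pos hn]; exact bot_le
            · rw [if_neg hn]
              refine le_trans (ihN (n - 1) m p hmp (by omega)) (sup_le ?_ ?_)
              · refine le_trans (Submodule.span_mono ?_) le_sup_left
                rintro x ⟨i, j, l, hi, hj, hjp, hl, rfl⟩
                exact ⟨i, j, l, by omega, hj, hjp, hl, rfl⟩
              · exact le_trans (hmono (by omega) le_rfl) le_sup_right
          · refine le_trans (ihN n (m + 1) p hm1 (by omega)) (sup_le ?_ le_sup_right)
            refine le_trans (Submodule.span_mono ?_) le_sup_left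
            rintro x ⟨i, j, l, hi, hj, hjp, hl, rfl⟩
            exact ⟨i, j, l, hi, by omega, hjp, hl, rfl⟩
  intro n m p hmp
  refine ⟨span_aux (n + (p - m)) n m p hmp le_rfl, ?_⟩
  intro c hc
  have hCzero := indep_aux (p - m) n m p hmp le_rfl
    (Finsupp.embDomain ⟨Subtype.val, Subtype.val_injective⟩ c) ?_ ?_
  · exact Finsupp.embDomain_eq_zero.mp hCzero
  · intro x hx
    rw [Finsupp.support_embDomain, Finset.mem_map] at hx
    obtain ⟨y, _, rfl⟩ := hx
    exact y.2
  · rw [Finsupp.sum_embDomain]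
    exact hc
end

section
/- Let k be a field and R = RCFM(k). Suppose M is an R-module of the form M = Hom_k(k⟨ℕ⟩, W) for some k-vector space W, with R acting by precomposition with the k-linear endomorphisms of k⟨ℕ⟩ given by row-column-finite matrices. If W is finite-dimensional with basis of size d, then M is isomorphic as an R-module to the direct sum of d copies of R/((I−A)R), where A is the shift matrix. -/
/-!
The sum-of-coordinates functional `ℓ` kills `I - A`, and conversely kills only what factors
through it: if the columns of `X` sum to zero, then `Y = -P X` with `P e_j = e_0 + ⋯ + e_{j-1}`
solves `(I - A) Y = X`, and `Y` is still row-finite because row `i` of `Y` is the sum of rows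
`0, …, i` of `X`. So `X ↦ ℓ ∘ X` identifies `R/(I - A)R` with `Hom_k(k⟨ℕ⟩, k)` (onto, via
diagonal matrices), compatibly with right multiplication, and a basis of `W` gives
`Hom_k(k⟨ℕ⟩, W) ≅ Hom_k(k⟨ℕ⟩, k)^d`.
-/

/-- With respect to a basis `b` of the free vector space `F = k⟨ℕ⟩`, an endomorphism of `F`
(automatically column-finite) is given by a row-column-finite matrix iff its matrix
`(i,j) ↦ coefficient of e_i in φ(e_j)` is moreover row-finite. -/
def RowFinite {k F : Type*} [Field k] [AddCommGroup F] [Module k F] (b : Module.Basis ℕ k F)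
    (φ : F →ₗ[k] F) : Prop :=
  ∀ i, {j | b.repr (φ (b j)) i ≠ 0}.Finite

/-- `RCFM(k)`, realized as the space of endomorphisms of `F = k⟨ℕ⟩` given by
row-column-finite matrices. -/
def RCFMsub (k F : Type*) [Field k] [AddCommGroup F] [Module k F] (b : Module.Basis ℕ k F) :
    Submodule k (F →ₗ[k] F) where
  carrier := {φ | RowFinite b φ}
  zero_mem' := by intro i; simp [RowFinite]
  add_mem' := by
    intro φ ψ hφ hψ i
    refine ((hφ i).union (hψ i)).subset fun j hj => ?_
    by_contra hc
    simp only [Set.mem_union, Set.mem_setOf_eq, not_or, not_not] at hc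
    exact hj (by simp [hc.1, hc.2])
  smul_mem' := by
    intro c φ hφ i
    refine (hφ i).subset fun j hj => ?_
    by_contra hc
    simp only [Set.mem_setOf_eq, not_not] at hc
    exact hj (by simp [hc])

/-- Closure of row-column-finiteness under composition (= matrix product). -/
theorem RowFinite.comp {k F : Type*} [Field k] [AddCommGroup F] [Module k F]
    {b : Module.Basis ℕ k F} {φ ψ : F →ₗ[k] F} (hφ : RowFinite b φ) (hψ : RowFinite b ψ) :
    RowFinite b (φ ∘ₗ ψ) := by
  classical
  have key : ∀ (χ : F →ₗ[k] F) (w : F) (i : ℕ),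
      b.repr (χ w) i = (b.repr w).sum fun l t => t * b.repr (χ (b l)) i := by
    intro χ w i
    conv_lhs => rw [← b.linearCombination_repr w, Finsupp.linearCombination_apply]
    rw [map_finsuppSum, map_finsuppSum, Finsupp.sum_apply]
    refine Finsupp.sum_congr fun l _ => ?_
    rw [map_smul, map_smul, Finsupp.smul_apply, smul_eq_mul]
  intro i
  refine (Set.Finite.biUnion (hφ i) fun l _ => hψ l).subset fun j hj => ?_
  simp only [Set.mem_setOf_eq] at hj
  by_contra hc
  simp only [Set.mem_iUnion, Set.mem_setOf_eq, not_exists, not_not] at hc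
  apply hj
  rw [LinearMap.comp_apply, key]
  refine Finset.sum_eq_zero fun l hl => ?_
  by_cases h : b.repr (φ (b l)) i = 0
  · simp [h]
  · have h2 : b.repr (ψ (b j)) l = 0 := hc l h
    rw [Finsupp.mem_support_iff] at hl
    exact absurd h2 hl

/-- The shift matrix `A`, as the endomorphism of `k⟨ℕ⟩` mapping the basis vector `e_j` to
`e_{j+1}`. -/
noncomputable def shiftEnd {k F : Type*} [Field k] [AddCommGroup F] [Module k F]
    (b : Module.Basis ℕ k F) : F →ₗ[k] F :=
  b.constr k fun j => b (j + 1)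

/-- The right ideal `(I−A)·R` of `R = RCFM(k)`, as a `k`-subspace of `R`. -/
noncomputable def Jideal (k F : Type*) [Field k] [AddCommGroup F] [Module k F]
    (b : Module.Basis ℕ k F) : Submodule k (RCFMsub k F b) :=
  Submodule.span k
    {P : RCFMsub k F b | ∃ X, RowFinite b X ∧
      (P : F →ₗ[k] F) = (LinearMap.id - shiftEnd b) ∘ₗ X}

namespace LinearMap

variable (R M : Type*) {ι : Type*} (φ : ι → Type*) [CommSemiring R] [AddCommMonoid M] [Module R M]
  [∀ i, AddCommMonoid (φ i)] [∀ i, Module R (φ i)]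

def piEquiv : (M →ₗ[R] ((i : ι) → φ i)) ≃ₗ[R] ((i : ι) → M →ₗ[R] φ i) where
  toFun f i := proj i ∘ₗ f
  invFun := pi
  map_add' _ _ := rfl
  map_smul' _ _ := rfl
  left_inv _ := rfl
  right_inv _ := rfl

end LinearMap

section ShiftQuotient

variable {k F : Type*} [Field k] [AddCommGroup F] [Module k F] (b : Module.Basis ℕ k F)

lemma shiftEnd_basis (j : ℕ) : shiftEnd b (b j) = b (j + 1) := b.constr_basis k _ j

lemma sumCoords_comp_id_sub_shiftEnd : b.sumCoords ∘ₗ (LinearMap.id - shiftEnd b) = 0 :=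
  b.ext fun j => by
    simp only [LinearMap.comp_apply, LinearMap.sub_apply, LinearMap.id_apply, map_sub,
      shiftEnd_basis, Module.Basis.sumCoords_self_apply, sub_self, LinearMap.zero_apply]

noncomputable def partialSumEnd : F →ₗ[k] F := b.constr k fun j => ∑ l ∈ Finset.range j, b l

lemma id_sub_shiftEnd_comp_partialSumEnd :
    (LinearMap.id - shiftEnd b) ∘ₗ partialSumEnd b = b.sumCoords.smulRight (b 0) - LinearMap.id :=
  b.ext fun j => by
    simp only [partialSumEnd, LinearMap.comp_apply, b.constr_basis, map_sum, LinearMap.sub_apply,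
      LinearMap.id_apply, shiftEnd_basis, Finset.sum_range_sub']
    simp

lemma coord_comp_partialSumEnd (i : ℕ) :
    b.coord i ∘ₗ partialSumEnd b = b.sumCoords - ∑ l ∈ Finset.range (i + 1), b.coord l :=
  b.ext fun j => by
    rcases lt_or_ge i j with h | h <;>
      simp [partialSumEnd, map_sum, Finsupp.single_apply, h, not_lt_of_ge]

lemma exists_rowFinite_eq_id_sub_shiftEnd_comp {X : F →ₗ[k] F} (hX : RowFinite b X)
    (hsum : b.sumCoords ∘ₗ X = 0) :
    ∃ Y, RowFinite b Y ∧ X = (LinearMap.id - shiftEnd b) ∘ₗ Y := by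
  refine ⟨-(partialSumEnd b ∘ₗ X), fun i => ?_, ?_⟩
  · have hcoord : ∀ j, b.repr (-(partialSumEnd b ∘ₗ X) (b j)) i =
        ∑ l ∈ Finset.range (i + 1), b.repr (X (b j)) l := by
      intro j
      have hP := LinearMap.congr_fun (coord_comp_partialSumEnd b i) (X (b j))
      have h0 : b.sumCoords (X (b j)) = 0 := LinearMap.congr_fun hsum (b j)
      simp only [LinearMap.comp_apply, LinearMap.sub_apply, LinearMap.sum_apply,
        Module.Basis.coord_apply, h0, zero_sub] at hP
      simp [hP]
    refine ((Finset.range (i + 1)).finite_toSet.biUnion fun l _ => hX l).subset fun j hj => ?_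
    obtain ⟨l, hl, hne⟩ := Finset.exists_ne_zero_of_sum_ne_zero ((hcoord j).symm.trans_ne hj)
    exact Set.mem_biUnion hl hne
  · rw [LinearMap.comp_neg, ← LinearMap.comp_assoc, id_sub_shiftEnd_comp_partialSumEnd]
    ext w
    have h0 : b.sumCoords (X w) = 0 := LinearMap.congr_fun hsum w
    simp [h0]

noncomputable def diagEnd (g : F →ₗ[k] k) : F →ₗ[k] F := b.constr k fun j => g (b j) • b j

lemma rowFinite_diagEnd (g : F →ₗ[k] k) : RowFinite b (diagEnd b g) := fun i =>
  (Set.finite_singleton i).subset fun j hj => by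
    by_contra hji
    exact hj (by simp [diagEnd, Ne.symm hji])

lemma sumCoords_comp_diagEnd (g : F →ₗ[k] k) : b.sumCoords ∘ₗ diagEnd b g = g :=
  b.ext fun j => by simp [diagEnd]

noncomputable def sumCoordsComp : RCFMsub k F b →ₗ[k] F →ₗ[k] k :=
  LinearMap.llcomp k F F k b.sumCoords ∘ₗ (RCFMsub k F b).subtype

lemma sumCoordsComp_apply (x : RCFMsub k F b) :
    sumCoordsComp b x = b.sumCoords ∘ₗ (x : F →ₗ[k] F) := rfl

lemma sumCoordsComp_surjective : Function.Surjective (sumCoordsComp b) := fun g =>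
  ⟨⟨diagEnd b g, rowFinite_diagEnd b g⟩, sumCoords_comp_diagEnd b g⟩

lemma ker_sumCoordsComp : LinearMap.ker (sumCoordsComp b) = Jideal k F b := by
  refine le_antisymm (fun x hx => ?_) (Submodule.span_le.mpr ?_)
  · obtain ⟨Y, hY, hxY⟩ := exists_rowFinite_eq_id_sub_shiftEnd_comp b x.2 hx
    exact Submodule.subset_span ⟨Y, hY, hxY⟩
  · rintro x ⟨Y, -, hxY⟩
    rw [SetLike.mem_coe, LinearMap.mem_ker, sumCoordsComp_apply, hxY, ← LinearMap.comp_assoc,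
      sumCoords_comp_id_sub_shiftEnd, LinearMap.zero_comp]

noncomputable def quotJidealEquiv : (RCFMsub k F b ⧸ Jideal k F b) ≃ₗ[k] (F →ₗ[k] k) :=
  (Submodule.quotEquivOfEq _ _ (ker_sumCoordsComp b).symm).trans
    ((sumCoordsComp b).quotKerEquivOfSurjective (sumCoordsComp_surjective b))

lemma quotJidealEquiv_mk (x : RCFMsub k F b) :
    quotJidealEquiv b (Submodule.Quotient.mk x) = b.sumCoords ∘ₗ (x : F →ₗ[k] F) := rfl

end ShiftQuotient

/-- If `W` is a vector space of dimension `d` over `k`, then `Hom_k(k⟨ℕ⟩, W)`, with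
`R = RCFM(k)` acting on the right by precomposition, is isomorphic as a right `R`-module to
the direct sum of `d` copies of `R/((I−A)R)`: there is a `k`-linear equivalence compatible
with the right actions of every row-column-finite matrix `r` (the action on the quotient
being induced by right multiplication, i.e. composition, with `r`). -/
theorem hom_iso_direct_sum (k F : Type*) [Field k] [AddCommGroup F] [Module k F]
    (b : Module.Basis ℕ k F) (W : Type*) [AddCommGroup W] [Module k W] [FiniteDimensional k W]
    (d : ℕ) (hd : Module.finrank k W = d) :
    ∃ e : (F →ₗ[k] W) ≃ₗ[k] (Fin d → ((RCFMsub k F b) ⧸ Jideal k F b)),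
      ∀ (r : F →ₗ[k] F) (hr : RowFinite b r) (f : F →ₗ[k] W) (i : Fin d)
        (x : RCFMsub k F b), e f i = Submodule.Quotient.mk x →
          e (f ∘ₗ r) i =
            Submodule.Quotient.mk (⟨(x : F →ₗ[k] F) ∘ₗ r, x.2.comp hr⟩ : RCFMsub k F b) := by
  let cb := Module.finBasisOfFinrankEq k W hd
  let e := LinearEquiv.congrRight cb.equivFun ≪≫ₗ LinearMap.piEquiv k F _ ≪≫ₗ
    LinearEquiv.piCongrRight fun _ => (quotJidealEquiv b).symm
  have he : ∀ f i, quotJidealEquiv b (e f i) = cb.coord i ∘ₗ f := fun f i =>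
    (quotJidealEquiv b).apply_symm_apply _
  refine ⟨e, fun r hr f i x hx => (quotJidealEquiv b).injective ?_⟩
  have hfx : cb.coord i ∘ₗ f = b.sumCoords ∘ₗ (x : F →ₗ[k] F) := by
    rw [← he, hx, quotJidealEquiv_mk]
  rw [he, quotJidealEquiv_mk, ← LinearMap.comp_assoc, hfx, LinearMap.comp_assoc]
end

section
/- Let k be a field and R = RCFM(k), with A the shift matrix. Then R = R(I−Aᵗ) + A R + k·E₀₀ as k-vector spaces, and the quotient R/(R(I−Aᵗ) + AR) is one-dimensional, spanned by the class of the matrix unit E₀₀, via the linear functional sending a matrix R' to ∑_{j∈ℕ} r'_{0j}. -/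
/-- The matrix unit `E₀₀`. -/
def matE00 (k : Type*) [Field k] : ℕ → ℕ → k := fun i j => if i = 0 ∧ j = 0 then 1 else 0

/-!
A matrix `P` lies in `R(I−Aᵗ) + AR` iff its `0`-th row sums to zero. Right multiplication by
`I−Aᵗ` takes successive differences along each row, and `AR` consists of the matrices with
vanishing `0`-th row; so the `0`-th row of `X(I−Aᵗ) + AY` telescopes to zero. Conversely, if the
`0`-th row of `P` sums to zero, its partial sums form a finitely supported row `x` with
`x(I−Aᵗ) = P₀`, and the remaining rows of `P` are `AY` for `Y` the matrix `P` shifted up by one.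
Subtracting `(∑ⱼ p₀ⱼ)·E₀₀` from an arbitrary `P` brings it into this case.
-/

section RowColumnFinite

variable {k : Type*} [Field k]

lemma exists_forall_ge_eq_zero_of_finite_support {M : Type*} [Zero M] {f : ℕ → M}
    (hf : f.support.Finite) : ∃ N, ∀ j, N ≤ j → f j = 0 := by
  obtain ⟨B, hB⟩ := hf.bddAbove
  exact ⟨B + 1, fun j hj => Function.notMem_support.mp fun hj' => by have := hB hj'; omega⟩

lemma RCF.sub {M N : ℕ → ℕ → k} (hM : RCF M) (hN : RCF N) : RCF (M - N) :=
  ⟨fun i => ((hM.1 i).union (hN.1 i)).subset (Function.support_sub (M i) (N i)),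
    fun j => ((hM.2 j).union (hN.2 j)).subset (Function.support_sub (M · j) (N · j))⟩

lemma RCF.smul {M : ℕ → ℕ → k} (c : k) (hM : RCF M) : RCF (c • M) :=
  ⟨fun i => (hM.1 i).subset (Function.support_const_smul_subset c (M i)),
    fun j => (hM.2 j).subset (Function.support_const_smul_subset c (M · j))⟩

lemma RCF.shiftUp {M : ℕ → ℕ → k} (hM : RCF M) : RCF (fun i j => M (i + 1) j) :=
  ⟨fun i => hM.1 (i + 1),
    fun j => (hM.2 j).preimage (Set.injOn_of_injective (add_left_injective 1))⟩

lemma rcf_matE00 : RCF (matE00 k) :=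
  ⟨fun _ => (Set.finite_singleton 0).subset fun j hj => by simp_all [matE00],
    fun _ => (Set.finite_singleton 0).subset fun i hi => by simp_all [matE00]⟩

lemma finsum_sub_smul_matE00_row_zero {P : ℕ → ℕ → k} (hP : (P 0).support.Finite) (c : k) :
    ∑ᶠ j, (P - c • matE00 k) 0 j = ∑ᶠ j, P 0 j - c := by
  have hE : ∑ᶠ j, c * matE00 k 0 j = c := by
    rw [finsum_eq_single _ 0 fun j hj => by simp [matE00, hj]]
    simp [matE00]
  calc ∑ᶠ j, (P - c • matE00 k) 0 j = ∑ᶠ j, P 0 j - ∑ᶠ j, c * matE00 k 0 j :=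
        finsum_sub_distrib hP
          ((rcf_matE00.1 0).subset (Function.support_mul_subset_right _ _))
    _ = ∑ᶠ j, P 0 j - c := by rw [hE]

lemma matMul_shiftA_zero (Y : ℕ → ℕ → k) (j : ℕ) : matMul (shiftA k) Y 0 j = 0 :=
  finsum_eq_zero_of_forall_eq_zero fun l => by simp [shiftA]

lemma matMul_shiftA_succ (Y : ℕ → ℕ → k) (i j : ℕ) : matMul (shiftA k) Y (i + 1) j = Y i j := by
  rw [matMul, finsum_eq_single _ i fun l hl => by simp [shiftA, Ne.symm hl]]
  simp [shiftA]

lemma matMul_one_sub_transpose_shiftA_zero (X : ℕ → ℕ → k) (i : ℕ) :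
    matMul X (idMat k - matTranspose (shiftA k)) i 0 = X i 0 := by
  rw [matMul, finsum_eq_single _ 0 fun l hl => by simp [idMat, matTranspose, shiftA, hl]]
  simp [idMat, matTranspose, shiftA]

lemma matMul_one_sub_transpose_shiftA_succ (X : ℕ → ℕ → k) (i j : ℕ) :
    matMul X (idMat k - matTranspose (shiftA k)) i (j + 1) = X i (j + 1) - X i j := by
  have hsupp : (fun l => X i l * (idMat k - matTranspose (shiftA k)) l (j + 1)).support ⊆
      ↑({j + 1, j} : Finset ℕ) := by
    intro l hl
    by_contra hl'
    simp only [Finset.coe_insert, Finset.coe_singleton, Set.mem_insert_iff,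
      Set.mem_singleton_iff, not_or] at hl'
    simp [idMat, matTranspose, shiftA, hl'.1, Ne.symm hl'.2] at hl
  rw [matMul, finsum_eq_sum_of_support_subset _ hsupp, Finset.sum_pair (by omega)]
  simp [idMat, matTranspose, shiftA, sub_eq_add_neg]

lemma finsum_matMul_one_sub_transpose_shiftA_row_zero {X : ℕ → ℕ → k}
    (hX : (X 0).support.Finite) :
    ∑ᶠ j, matMul X (idMat k - matTranspose (shiftA k)) 0 j = 0 := by
  obtain ⟨N, hN⟩ := exists_forall_ge_eq_zero_of_finite_support hX
  have hsupp : (fun j => matMul X (idMat k - matTranspose (shiftA k)) 0 j).support ⊆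
      ↑(Finset.range (N + 1)) := by
    intro j hj
    by_contra hjN
    simp only [Finset.coe_range, Set.mem_Iio, not_lt] at hjN
    obtain ⟨m, rfl⟩ := Nat.exists_eq_add_one.mpr (by omega : 0 < j)
    apply hj
    dsimp only
    rw [matMul_one_sub_transpose_shiftA_succ, hN _ (by omega), hN _ (by omega), sub_self]
  rw [finsum_eq_sum_of_support_subset _ hsupp, Finset.sum_range_succ']
  simp only [matMul_one_sub_transpose_shiftA_succ, matMul_one_sub_transpose_shiftA_zero]
  rw [Finset.sum_range_sub (X 0), hN N le_rfl]
  ring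

def firstRowPartialSums (P : ℕ → ℕ → k) : ℕ → ℕ → k :=
  fun i j => if i = 0 then ∑ l ∈ Finset.range (j + 1), P 0 l else 0

lemma matMul_firstRowPartialSums_add_matMul_shiftA (P : ℕ → ℕ → k) :
    matMul (firstRowPartialSums P) (idMat k - matTranspose (shiftA k)) +
      matMul (shiftA k) (fun i j => P (i + 1) j) = P := by
  funext i j
  rcases i with _ | i <;> rcases j with _ | j <;>
    simp [firstRowPartialSums, matMul_shiftA_zero, matMul_shiftA_succ,
      matMul_one_sub_transpose_shiftA_zero, matMul_one_sub_transpose_shiftA_succ,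
      Finset.sum_range_succ]

lemma rcf_firstRowPartialSums {P : ℕ → ℕ → k} (hP : (P 0).support.Finite)
    (hsum : ∑ᶠ j, P 0 j = 0) : RCF (firstRowPartialSums P) := by
  obtain ⟨N, hN⟩ := exists_forall_ge_eq_zero_of_finite_support hP
  have hpartial : ∀ j, N ≤ j + 1 → ∑ l ∈ Finset.range (j + 1), P 0 l = 0 := by
    intro j hj
    rw [← hsum, finsum_eq_sum_of_support_subset (P 0) (s := Finset.range (j + 1))]
    intro l hl
    by_contra hl'
    simp only [Finset.coe_range, Set.mem_Iio, not_lt] at hl'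
    exact hl (hN l (by omega))
  refine ⟨fun i => ?_, fun _ => (Set.finite_singleton 0).subset fun i hi => ?_⟩
  · rcases i with _ | i
    · refine (Set.finite_Iio N).subset fun j hj => ?_
      by_contra hjN
      simp only [Set.mem_Iio, not_lt] at hjN
      exact hj (hpartial j (by omega))
    · simp [firstRowPartialSums]
  · by_contra hi0
    exact hi (if_neg hi0)

lemma exists_matMul_add_matMul_shiftA_iff {P : ℕ → ℕ → k} (hP : RCF P) :
    (∃ X Y : ℕ → ℕ → k, RCF X ∧ RCF Y ∧
        P = matMul X (idMat k - matTranspose (shiftA k)) + matMul (shiftA k) Y) ↔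
      ∑ᶠ j, P 0 j = 0 := by
  constructor
  · rintro ⟨X, Y, hX, -, rfl⟩
    simp only [Pi.add_apply, matMul_shiftA_zero, add_zero]
    exact finsum_matMul_one_sub_transpose_shiftA_row_zero (hX.1 0)
  · intro hsum
    exact ⟨_, _, rcf_firstRowPartialSums (hP.1 0) hsum, hP.shiftUp,
      (matMul_firstRowPartialSums_add_matMul_shiftA P).symm⟩

end RowColumnFinite

/-- `R = R(I−Aᵗ) + AR + k·E₀₀` and the quotient `R/(R(I−Aᵗ)+AR)` is one-dimensional,
spanned by the class of `E₀₀`, via the functional `R' ↦ ∑_j r'_{0j}`: a row-column-finite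
matrix lies in `R(I−Aᵗ) + AR` exactly when the sum of its `0`-th row vanishes. -/
theorem decomposition_E00 (k : Type*) [Field k] :
    (∀ P : ℕ → ℕ → k, RCF P →
      ∃ (X Y : ℕ → ℕ → k) (c : k), RCF X ∧ RCF Y ∧
        P = matMul X (idMat k - matTranspose (shiftA k)) + matMul (shiftA k) Y
              + c • matE00 k) ∧
    (∀ P : ℕ → ℕ → k, RCF P →
      ((∃ X Y : ℕ → ℕ → k, RCF X ∧ RCF Y ∧
          P = matMul X (idMat k - matTranspose (shiftA k)) + matMul (shiftA k) Y) ↔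
        (∑ᶠ j, P 0 j) = 0)) := by
  refine ⟨fun P hP => ?_, fun P hP => exists_matMul_add_matMul_shiftA_iff hP⟩
  set c := ∑ᶠ j, P 0 j
  have hrest : RCF (P - c • matE00 k) := hP.sub (rcf_matE00.smul c)
  have hsum : ∑ᶠ j, (P - c • matE00 k) 0 j = 0 := by
    rw [finsum_sub_smul_matE00_row_zero (hP.1 0), sub_self]
  obtain ⟨X, Y, hX, hY, hXY⟩ := (exists_matMul_add_matMul_shiftA_iff hrest).mpr hsum
  exact ⟨X, Y, c, hX, hY, sub_eq_iff_eq_add.mp hXY⟩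
end

section
/- Let k be a field and let φ: k⟨B⟩ → k⟨A⟩ be a k-linear map between free vector spaces on countable bases, equipped with height functions β: B → ℕ and α: A → ℕ having finite fibers, such that φ is controlled: for every m ≥ 1 there exists M ≥ 1 with φ(k⟨B_M⟩) ⊆ k⟨A_m⟩, where A_m = α^{-1}({m, m+1, …}) and similarly for B_M. Then the image φ(k⟨B⟩), equipped with a suitable basis and height function, is again a free controlled module: there exist a basis C of φ(k⟨B⟩) and a function γ: C → ℕ with finite fibers such that, writing C_m := γ^{-1}({m, m+1, …}) and V_m = φ(k⟨B_m⟩), C_m is a basis of V_m for every m ≥ 1. -/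
open Submodule Set

section auxlemmas
variable {k E : Type*} [Field k] [AddCommGroup E] [Module k E]

/-- An independent family contained in a finite-dimensional submodule has finite index. -/
lemma aux_finite_of_li {ι : Type*} (W : Submodule k E) [FiniteDimensional k W]
    {v : ι → E} (hv : LinearIndependent k v) (hvW : ∀ i, v i ∈ W) : Finite ι := by
  have h2 : LinearIndependent k (fun i => (⟨v i, hvW i⟩ : W)) := by
    apply LinearIndependent.of_comp W.subtype
    exact hv
  exact h2.finite

lemma aux_finite_set_of_li (W : Submodule k E) [FiniteDimensional k W]
    {s : Set E} (hs : LinearIndependent k ((↑) : s → E)) (hsW : s ⊆ ↑W) : s.Finite := by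
  have : Finite s := aux_finite_of_li W hs (fun i => hsW i.2)
  exact Set.toFinite s

/-- Disjoint subsets of a linearly independent set have disjoint spans. -/
lemma aux_disjoint_span {C s t : Set E} (hC : LinearIndependent k ((↑) : C → E))
    (hs : s ⊆ C) (ht : t ⊆ C) (hst : Disjoint s t) :
    Disjoint (span k s) (span k t) := by
  have hs' : s = Subtype.val '' ((↑) ⁻¹' s : Set C) := by
    rw [Set.image_preimage_eq_inter_range, Subtype.range_coe]
    exact (Set.inter_eq_left.mpr hs).symm
  have ht' : t = Subtype.val '' ((↑) ⁻¹' t : Set C) := by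
    rw [Set.image_preimage_eq_inter_range, Subtype.range_coe]
    exact (Set.inter_eq_left.mpr ht).symm
  rw [hs', ht']
  exact hC.disjoint_span_image (by
    rw [Set.disjoint_iff_inter_eq_empty] at hst ⊢
    rw [← Set.preimage_inter, hst, Set.preimage_empty])

/-- One descending step of the adapted-basis extension inside `U'`. -/
lemma aux_step_down (V : ℕ → Submodule k E) (hV : Antitone V)
    (U U' : Submodule k E) [FiniteDimensional k U'] (hUU' : U ≤ U')
    (C : Set E) (hCU : C ⊆ ↑U)
    (hCli : LinearIndependent k ((↑) : C → E))
    (hCspan : ∀ m, span k (C ∩ ↑(V m)) = V m ⊓ U)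
    (m : ℕ)
    (D : Set E) (hD : D ⊆ ↑(V (m+1) ⊓ U'))
    (hDli : LinearIndependent k ((↑) : D → E))
    (hDinv : ∀ m', m + 1 ≤ m' → (C ∩ ↑(V m') ⊆ D ∧ span k (D ∩ ↑(V m')) = V m' ⊓ U')) :
    ∃ D' : Set E, D' ⊆ ↑(V m ⊓ U') ∧ LinearIndependent k ((↑) : D' → E) ∧
      ∀ m', m ≤ m' → (C ∩ ↑(V m') ⊆ D' ∧ span k (D' ∩ ↑(V m')) = V m' ⊓ U') := by
  classical
  set s : Set E := D ∪ (C ∩ ↑(V m)) with hs_def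
  have hDVm1 : D ⊆ ↑(V (m+1)) := fun x hx => (hD hx).1
  have hDU' : D ⊆ ↑U' := fun x hx => (hD hx).2
  have hspanD : span k D = V (m+1) ⊓ U' := by
    have h1 : D ∩ ↑(V (m+1)) = D := Set.inter_eq_left.mpr hDVm1
    have := (hDinv (m+1) le_rfl).2
    rwa [h1] at this
  have hsVU : s ⊆ ↑(V m ⊓ U') := by
    intro x hx
    rcases hx with hx | hx
    · exact ⟨hV (Nat.le_succ m) (hD hx).1, (hD hx).2⟩
    · exact ⟨hx.2, hUU' (hCU hx.1)⟩
  have hsli : LinearIndependent k ((↑) : s → E) := by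
    have hsT : s = D ∪ ((C ∩ ↑(V m)) \ D) := by
      rw [Set.union_diff_self]
    rw [hsT]
    apply (show LinearIndepOn k id D from hDli).id_union ((show LinearIndepOn k id C from hCli).mono (fun x hx => hx.1.1))
    rw [hspanD]
    set T : Set E := (C ∩ ↑(V m)) \ D with hT_def
    rw [disjoint_iff_inf_le]
    intro x hx
    obtain ⟨hx1, hx2⟩ := hx
    have hxU : x ∈ U := by
      have : span k T ≤ U := span_le.mpr (fun y hy => hCU hy.1.1)
      exact this hx2
    have hx3 : x ∈ span k (C ∩ ↑(V (m+1))) := by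
      rw [hCspan]
      exact ⟨hx1.1, hxU⟩
    have hdisj : Disjoint (span k (C ∩ ↑(V (m+1)))) (span k T) := by
      apply aux_disjoint_span hCli (fun y hy => hy.1) (fun y hy => hy.1.1)
      rw [Set.disjoint_left]
      intro y hy hyT
      exact hyT.2 ((hDinv (m+1) le_rfl).1 hy)
    have := disjoint_iff_inf_le.mp hdisj ⟨hx3, hx2⟩
    simpa using this
  have hst : s ⊆ ↑(V m ⊓ U') := hsVU
  have hsli' : LinearIndepOn k id s := hsli
  set D' : Set E := hsli'.extend hst with hD'_def
  refine ⟨D', hsli'.extend_subset hst, hsli'.linearIndepOn_extend hst, ?_⟩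
  have hsD' : s ⊆ D' := hsli'.subset_extend hst
  have hD'sub : D' ⊆ ↑(V m ⊓ U') := hsli'.extend_subset hst
  intro m' hm'
  constructor
  · intro x hx
    exact hsD' (Or.inr ⟨hx.1, hV hm' hx.2⟩)
  · apply le_antisymm
    · apply span_le.mpr
      intro x hx
      exact ⟨hx.2, (hD'sub hx.1).2⟩
    · rcases eq_or_lt_of_le hm' with h | h
      · rw [← h]
        have h1 : D' ∩ ↑(V m) = D' :=
          Set.inter_eq_left.mpr (fun x hx => (hD'sub hx).1)
        rw [h1]
        intro x hx
        exact hsli'.subset_span_extend hst hx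
      · have hm1 : m + 1 ≤ m' := h
        rw [← (hDinv m' hm1).2]
        apply span_mono
        exact Set.inter_subset_inter_left _ (fun x hx => hsD' (Or.inl hx))

/-- Extension of an adapted basis from `U` to `U'`. -/
lemma aux_extend (V : ℕ → Submodule k E) (hV : Antitone V)
    (U U' : Submodule k E) [FiniteDimensional k U'] (hUU' : U ≤ U')
    (r : ℕ) (hr : V r ⊓ U' = ⊥)
    (C : Set E) (hCU : C ⊆ ↑U) (hC0 : C ⊆ ↑(V 0))
    (hCli : LinearIndependent k ((↑) : C → E))
    (hCspan : ∀ m, span k (C ∩ ↑(V m)) = V m ⊓ U) :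
    ∃ C' : Set E, C ⊆ C' ∧ C'.Finite ∧ C' ⊆ ↑U' ∧ C' ⊆ ↑(V 0) ∧
      LinearIndependent k ((↑) : C' → E) ∧
      ∀ m, span k (C' ∩ ↑(V m)) = V m ⊓ U' := by
  set Q : ℕ → Prop := fun m => ∃ D : Set E, D ⊆ ↑(V m ⊓ U') ∧
      LinearIndependent k ((↑) : D → E) ∧
      ∀ m', m ≤ m' → (C ∩ ↑(V m') ⊆ D ∧ span k (D ∩ ↑(V m')) = V m' ⊓ U') with hQ
  have hQr : Q r := by
    refine ⟨∅, by simp, linearIndependent_empty k E, ?_⟩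
    intro m' hm'
    have hbot : V m' ⊓ U' = ⊥ := by
      apply le_antisymm _ bot_le
      rw [← hr]
      exact inf_le_inf_right _ (hV hm')
    constructor
    · intro x hx
      exfalso
      have hx0 : x ∈ V m' ⊓ U' := ⟨hx.2, hUU' (hCU hx.1)⟩
      rw [hbot] at hx0
      have : x ≠ 0 := hCli.ne_zero ⟨x, hx.1⟩
      exact this hx0
    · simp [hbot]
  have hstep : ∀ m, Q (m+1) → Q m := by
    intro m ⟨D, hD, hDli, hDinv⟩
    exact aux_step_down V hV U U' hUU' C hCU hCli hCspan m D hD hDli hDinv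
  have hQ0 : Q 0 := by
    have key : ∀ j, Q (r - j) := by
      intro j
      induction j with
      | zero => simpa using hQr
      | succ j ih =>
        rcases Nat.eq_zero_or_pos (r - j) with h | h
        · have : r - (j+1) = 0 := by omega
          rw [this]; rw [h] at ih; exact ih
        · have : r - j = (r - (j+1)) + 1 := by omega
          rw [this] at ih
          exact hstep _ ih
    simpa using key r
  obtain ⟨D, hD, hDli, hDinv⟩ := hQ0
  have hCD : C ⊆ D := by
    intro x hx
    exact (hDinv 0 le_rfl).1 ⟨hx, hC0 hx⟩
  have hDU' : D ⊆ ↑U' := fun x hx => (hD hx).2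
  exact ⟨D, hCD, aux_finite_set_of_li U' hDli hDU', hDU',
    fun x hx => (hD hx).1, hDli, fun m => (hDinv m (Nat.zero_le m)).2⟩

end auxlemmas

noncomputable def auxChain {X : Type*} (P : ℕ → X → Prop) (R : X → X → Prop)
    (x0 : X) (h0 : P 0 x0)
    (step : ∀ n x, P n x → ∃ y, R x y ∧ P (n+1) y) : (n : ℕ) → {x : X // P n x}
  | 0 => ⟨x0, h0⟩
  | n+1 =>
    ⟨(step n (auxChain P R x0 h0 step n).1 (auxChain P R x0 h0 step n).2).choose,
     (step n (auxChain P R x0 h0 step n).1 (auxChain P R x0 h0 step n).2).choose_spec.2⟩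

lemma auxChain_rel {X : Type*} (P : ℕ → X → Prop) (R : X → X → Prop)
    (x0 : X) (h0 : P 0 x0)
    (step : ∀ n x, P n x → ∃ y, R x y ∧ P (n+1) y) (n : ℕ) :
    R (auxChain P R x0 h0 step n).1 (auxChain P R x0 h0 step (n+1)).1 :=
  (step n (auxChain P R x0 h0 step n).1 (auxChain P R x0 h0 step n).2).choose_spec.1

/-- The image of a controlled homomorphism between free controlled modules is free
controlled: if `φ : k⟨B⟩ → k⟨A⟩` is controlled with respect to height functions `β, α`
with finite fibers, then there is a family `c : ι → k⟨A⟩` with a height function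
`γ : ι → ℕ` with finite fibers such that for every `m` the subfamily indexed by
`{i | m ≤ γ i}` is a basis of `V_m = φ(k⟨B_m⟩)`, where `B_m = β⁻¹([m,∞))`; in particular
(`m = 0`) the whole family is a basis of the image `φ(k⟨B⟩)`. -/
theorem image_of_controlled_is_free (k : Type*) [Field k] (A B : Type*)
    (α : A → ℕ) (β : B → ℕ)
    (hα : ∀ n, {a | α a = n}.Finite) (hβ : ∀ n, {b | β b = n}.Finite)
    (φ : (B →₀ k) →ₗ[k] (A →₀ k))
    (hcon : ∀ m : ℕ, ∃ M : ℕ, ∀ v : B →₀ k,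
      (∀ b ∈ v.support, M ≤ β b) → ∀ a ∈ (φ v).support, m ≤ α a) :
    ∃ (ι : Type) (γ : ι → ℕ) (c : ι → (A →₀ k)),
      (∀ n, {i | γ i = n}.Finite) ∧
      ∀ m : ℕ, ∃ b : Module.Basis {i // m ≤ γ i} k
          ↥((Finsupp.supported k k {b : B | m ≤ β b}).map φ),
        ∀ i : {i // m ≤ γ i}, (b i : A →₀ k) = c i.1 := by
  classical
  set E := A →₀ k with hE
  set V : ℕ → Submodule k E := fun m => (Finsupp.supported k k {b : B | m ≤ β b}).map φ
    with hV_def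
  have hVanti : Antitone V := by
    apply antitone_nat_of_succ_le
    intro m
    exact Submodule.map_mono (Finsupp.supported_mono (fun b hb => le_trans (Nat.le_succ m) hb))
  -- finite-dimensionality of truncations
  have hαfin : ∀ n : ℕ, {a | α a < n}.Finite := by
    intro n
    have : {a | α a < n} = ⋃ j ∈ Finset.range n, {a | α a = j} := by
      ext a; simp [Finset.mem_range]
    rw [this]
    exact Set.Finite.biUnion (Finset.range n).finite_toSet (fun j _ => hα j)
  set U : ℕ → Submodule k E := fun n => V 0 ⊓ Finsupp.supported k k {a | α a < n}
    with hU_def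
  have hUfd : ∀ n, FiniteDimensional k (U n) := by
    intro n
    have h1 : FiniteDimensional k (Finsupp.supported k k {a | α a < n}) := by
      rw [Finsupp.supported_eq_span_single]
      exact FiniteDimensional.span_of_finite k ((hαfin n).image _)
    exact finiteDimensional_of_le inf_le_right
  have hUmono : ∀ n, U n ≤ U (n+1) := by
    intro n
    exact inf_le_inf_left _ (Finsupp.supported_mono (fun a ha => lt_trans ha (Nat.lt_succ_self n)))
  have hU0V : ∀ n, U n ≤ V 0 := fun n => inf_le_left
  -- stabilization: the filtration eventually misses each truncation
  have hstab : ∀ n, ∃ r, V r ⊓ U n = ⊥ := by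
    intro n
    obtain ⟨M, hM⟩ := hcon n
    refine ⟨M, ?_⟩
    apply le_antisymm _ bot_le
    have h1 : V M ≤ Finsupp.supported k k {a | n ≤ α a} := by
      rintro x ⟨v, hv, rfl⟩
      rw [Finsupp.mem_supported]
      intro a ha
      exact hM v (fun b hb => (Finsupp.mem_supported k v).mp hv hb) a ha
    have h2 : Disjoint (Finsupp.supported k k {a | n ≤ α a})
        (Finsupp.supported k k {a | α a < n}) := by
      apply Finsupp.disjoint_supported_supported
      rw [Set.disjoint_left]
      intro a ha ha'
      simp only [Set.mem_setOf_eq] at ha ha'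
      omega
    intro x hx
    exact (disjoint_iff_inf_le.mp h2) ⟨h1 hx.1, hx.2.2⟩
  -- build the chain of adapted bases
  set Inv : ℕ → Set E → Prop := fun n C => C.Finite ∧ C ⊆ ↑(U n) ∧ C ⊆ ↑(V 0) ∧
      LinearIndependent k ((↑) : C → E) ∧
      ∀ m, span k (C ∩ ↑(V m)) = V m ⊓ U n with hInv
  have hInv0 : Inv 0 ∅ := by
    refine ⟨Set.finite_empty, by simp, by simp, linearIndependent_empty k E, ?_⟩
    intro m
    have : U 0 = ⊥ := by
      apply le_antisymm _ bot_le
      intro x hx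
      have : x ∈ Finsupp.supported k k (∅ : Set A) := by
        have h0 : {a | α a < 0} = (∅ : Set A) := by ext a; simp
        rw [← h0]; exact hx.2
      rwa [Finsupp.supported_empty] at this
    simp [this]
  have hInvStep : ∀ n C, Inv n C → ∃ C', C ⊆ C' ∧ Inv (n+1) C' := by
    intro n C ⟨hCfin, hCU, hC0, hCli, hCspan⟩
    obtain ⟨r, hr⟩ := hstab (n+1)
    haveI := hUfd (n+1)
    obtain ⟨C', hCC', hC'fin, hC'U, hC'0, hC'li, hC'span⟩ :=
      aux_extend V hVanti (U n) (U (n+1)) (hUmono n) r hr C hCU hC0 hCli hCspan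
    exact ⟨C', hCC', hC'fin, hC'U, hC'0, hC'li, hC'span⟩
  set f : (n : ℕ) → {C : Set E // Inv n C} :=
    auxChain Inv (· ⊆ ·) ∅ hInv0 hInvStep with hf
  have hfmono : Monotone (fun n => (f n).1) :=
    monotone_nat_of_le_succ (fun n => auxChain_rel Inv (· ⊆ ·) ∅ hInv0 hInvStep n)
  set C : Set E := ⋃ n, (f n).1 with hC_def
  have hCli : LinearIndependent k ((↑) : C → E) :=
    linearIndepOn_iUnion_of_directed (v := id) hfmono.directed_le (fun n => (f n).2.2.2.2.1)
  have hC0 : C ⊆ ↑(V 0) := by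
    intro x hx
    obtain ⟨n, hn⟩ := Set.mem_iUnion.mp hx
    exact (f n).2.2.2.1 hn
  have hCcnt : C.Countable := Set.countable_iUnion (fun n => (f n).2.1.countable)
  -- the union is an adapted basis of the whole filtration
  have hCspan : ∀ m, span k (C ∩ ↑(V m)) = V m := by
    intro m
    apply le_antisymm
    · exact span_le.mpr (fun x hx => hx.2)
    · intro x hx
      have hx0 : x ∈ V 0 := hVanti (Nat.zero_le m) hx
      set n' : ℕ := (x.support.sup α) + 1 with hn'
      have hxU : x ∈ U n' := by
        refine Submodule.mem_inf.mpr ⟨hx0, ?_⟩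
        rw [Finsupp.mem_supported]
        intro a ha
        calc α a ≤ x.support.sup α := Finset.le_sup ha
        _ < n' := Nat.lt_succ_self _
      have hxspan : x ∈ span k ((f n').1 ∩ ↑(V m)) := by
        rw [(f n').2.2.2.2.2 m]
        exact ⟨hx, hxU⟩
      refine span_mono ?_ hxspan
      exact Set.inter_subset_inter_left _ (Set.subset_iUnion (fun n => (f n).1) n')
  -- the level function
  have hex : ∀ x ∈ C, ∃ m, x ∉ V m := by
    intro x hx
    obtain ⟨n, hn⟩ := Set.mem_iUnion.mp hx
    obtain ⟨r, hr⟩ := hstab n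
    refine ⟨r, fun hxr => ?_⟩
    have : x ∈ V r ⊓ U n := ⟨hxr, (f n).2.2.1 hn⟩
    rw [hr, Submodule.mem_bot] at this
    exact hCli.ne_zero ⟨x, hx⟩ this
  set lev : E → ℕ := fun x => if h : ∃ m, x ∉ V m then Nat.find h - 1 else 0 with hlev
  have hlev_key : ∀ x ∈ C, ∀ m, (m ≤ lev x ↔ x ∈ V m) := by
    intro x hx m
    have h : ∃ m, x ∉ V m := hex x hx
    have hfind : 1 ≤ Nat.find h := by
      rcases Nat.eq_zero_or_pos (Nat.find h) with h0 | h0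
      · exfalso
        have hsp := Nat.find_spec h
        rw [h0] at hsp
        exact hsp (hC0 hx)
      · exact h0
    have hlevx : lev x = Nat.find h - 1 := by
      rw [hlev]; simp only [dif_pos h]
    rw [hlevx]
    constructor
    · intro hm
      by_contra hxm
      have : Nat.find h ≤ m := Nat.find_le hxm
      omega
    · intro hxm
      have hmlt : m < Nat.find h := by
        by_contra hge
        push_neg at hge
        exact (Nat.find_spec h) (hVanti hge hxm)
      omega
  -- level fibers are finite
  have hfiber : ∀ m, {x | x ∈ C ∧ lev x = m}.Finite := by
    intro m
    set F : Set E := {x | x ∈ C ∧ lev x = m} with hF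
    have hFC : F ⊆ C := fun x hx => hx.1
    have hFVm : F ⊆ ↑(V m) := fun x hx => (hlev_key x hx.1 m).mp (le_of_eq hx.2.symm)
    have hFnot : ∀ x ∈ F, x ∉ V (m+1) := by
      intro x hx hmem
      have h1 := (hlev_key x hx.1 (m+1)).mpr hmem
      have h2 : lev x = m := hx.2
      omega
    -- map to the quotient by V (m+1)
    set π := (V (m+1)).mkQ with hπ
    have hFli : LinearIndependent k ((↑) : F → E) := (show LinearIndepOn k id C from hCli).mono hFC
    have hdisj : Disjoint (span k (Set.range ((↑) : F → E))) (LinearMap.ker π) := by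
      rw [Subtype.range_coe, hπ, Submodule.ker_mkQ]
      have h1 : Disjoint (span k F) (span k (C ∩ ↑(V (m+1)))) := by
        apply aux_disjoint_span hCli hFC (fun x hx => hx.1)
        rw [Set.disjoint_left]
        intro x hx hx2
        exact hFnot x hx hx2.2
      rw [hCspan (m+1)] at h1
      exact h1
    have hπli : LinearIndependent k (π ∘ ((↑) : F → E)) := hFli.map hdisj
    -- image lands in a finite-dimensional submodule of the quotient
    set W : Submodule k (E ⧸ V (m+1)) :=
      ((Finsupp.supported k k {b : B | β b = m}).map φ).map π with hW
    haveI : FiniteDimensional k (Finsupp.supported k k {b : B | β b = m}) := by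
      rw [Finsupp.supported_eq_span_single]
      exact FiniteDimensional.span_of_finite k ((hβ m).image _)
    haveI : FiniteDimensional k W := by
      rw [hW]
      infer_instance
    have hVm_decomp : V m = V (m+1) ⊔ (Finsupp.supported k k {b : B | β b = m}).map φ := by
      have hsets : {b : B | m ≤ β b} = {b : B | m+1 ≤ β b} ∪ {b : B | β b = m} := by
        ext b; simp only [Set.mem_setOf_eq, Set.mem_union]; omega
      rw [hV_def]
      simp only
      rw [hsets, Finsupp.supported_union, Submodule.map_sup]
    have hmemW : ∀ x : F, (π ∘ ((↑) : F → E)) x ∈ W := by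
      intro x
      have hxVm : (x : E) ∈ V m := hFVm x.2
      rw [hVm_decomp] at hxVm
      have : π (x : E) ∈ (V (m+1) ⊔ (Finsupp.supported k k {b : B | β b = m}).map φ).map π :=
        Submodule.mem_map_of_mem hxVm
      rw [Submodule.map_sup] at this
      rcases Submodule.mem_sup.mp this with ⟨y, hy, z, hz, hyz⟩
      obtain ⟨y', hy', rfl⟩ := hy
      have hy0 : π y' = 0 := (Submodule.Quotient.mk_eq_zero _).mpr hy'
      rw [hπ] at *
      simp only [Function.comp_apply]
      rw [← hyz]
      rw [Submodule.mkQ_apply] at hy0 ⊢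
      rw [hy0, zero_add]
      exact hz
    have : Finite F := aux_finite_of_li W hπli hmemW
    exact Set.toFinite F
  -- enumerate C by a subset of ℕ
  obtain ⟨e, he⟩ := Set.countable_iff_exists_injective.mp hCcnt
  set eqv : C ≃ ↑(Set.range e) := Equiv.ofInjective e he with heqv
  refine ⟨↑(Set.range e), fun i => lev ((eqv.symm i : C) : E),
    fun i => ((eqv.symm i : C) : E), ?_, ?_⟩
  · -- finite fibers
    intro n
    set cmap : ↑(Set.range e) → E := fun i => ((eqv.symm i : C) : E) with hcmap
    have hcinj : Function.Injective cmap :=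
      Subtype.val_injective.comp (eqv.symm.injective)
    have hsub : {i | lev (cmap i) = n} ⊆ cmap ⁻¹' {x | x ∈ C ∧ lev x = n} := by
      intro i hi
      exact ⟨(eqv.symm i).2, hi⟩
    exact Set.Finite.subset (Set.Finite.preimage hcinj.injOn (hfiber n)) hsub
  · -- bases of each level of the filtration
    intro m
    set cmap : ↑(Set.range e) → E := fun i => ((eqv.symm i : C) : E) with hcmap
    set v : {i : ↑(Set.range e) // m ≤ lev (cmap i)} → E := fun j => cmap j.1 with hv
    have hvli : LinearIndependent k v := by
      have : v = ((↑) : C → E) ∘ (fun j => eqv.symm j.1) := rfl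
      rw [this]
      exact hCli.comp _ (eqv.symm.injective.comp Subtype.val_injective)
    have hrange : Set.range v = C ∩ ↑(V m) := by
      ext x
      constructor
      · rintro ⟨j, rfl⟩
        refine ⟨(eqv.symm j.1).2, ?_⟩
        exact (hlev_key _ (eqv.symm j.1).2 m).mp j.2
      · rintro ⟨hxC, hxV⟩
        have heq : eqv.symm (eqv ⟨x, hxC⟩) = ⟨x, hxC⟩ := eqv.symm_apply_apply _
        refine ⟨⟨eqv ⟨x, hxC⟩, ?_⟩, ?_⟩
        · show m ≤ lev ((eqv.symm (eqv ⟨x, hxC⟩) : C) : E)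
          rw [heq]
          exact (hlev_key x hxC m).mpr hxV
        · show ((eqv.symm (eqv ⟨x, hxC⟩) : C) : E) = x
          rw [heq]
    have hspanv : span k (Set.range v) = V m := by rw [hrange]; exact hCspan m
    refine ⟨(Module.Basis.span hvli).map (LinearEquiv.ofEq _ _ hspanv), ?_⟩
    intro i
    rw [Module.Basis.map_apply, LinearEquiv.coe_ofEq_apply, Module.Basis.span_apply]
end
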